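/- arXiv:1909.12342 — 7 statements merged into one kernel-verified Lean document; each statement's English description precedes it below -/
import Mathlib

section
/- Let D : ℝ² → ℝ be continuous, compactly supported and circularly symmetric, let W ⊂ ℝ² be a finite set, and let X₀ = ∑_{w∈W} α_w δ_w be a finitely-atomic signed measure with α_w ≠ 0 for all w ∈ W. Fix angles θ₁,…,θ_m and set R_i(t) = (1/√m)·L_{θᵢ}[D∗X₀](t). Suppose there is a dual certificate Q given, for each i, by a finite list of locations t_{i1},…,t_{iJᵢ} ∈ ℝ and weights q_{i1},…,q_{iJᵢ} ∈ ℝ, such that the function g(w) = (1/√m)·∑_{i=1}^m ∑_{j=1}^{Jᵢ} q_{ij}·L_{θᵢ}[D](t_{ij} − ⟨u_{θᵢ}^⊥, w⟩) satisfies g(w) = sign(α_w) for every w ∈ W and |g(w)| ≤ 1 for every w ∈ ℝ². Then X₀ is an optimal solution of total-variation minimization subject to the line-scan constraints: for every finite signed Borel measure X on ℝ² satisfying L_{θᵢ}[D∗X](t) = √m·R_i(t) for all i ∈ {1,…,m} and all t ∈ ℝ, the total variation satisfies |X|(ℝ²) ≥ |X₀|(ℝ²) = ∑_{w∈W} |α_w|.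 -/
noncomputable section
open MeasureTheory

/-- Probe direction `u_θ = (cos θ, sin θ)`. -/
def uvec (θ : ℝ) : ℝ × ℝ := (Real.cos θ, Real.sin θ)

/-- Sweep direction `u_θ^⊥ = (sin θ, -cos θ)`. -/
def uperp (θ : ℝ) : ℝ × ℝ := (Real.sin θ, -Real.cos θ)

/-- Euclidean inner product on ℝ². -/
def dot2 (a b : ℝ × ℝ) : ℝ := a.1 * b.1 + a.2 * b.2

/-- Euclidean norm on ℝ². -/
def norm2 (a : ℝ × ℝ) : ℝ := Real.sqrt (a.1 ^ 2 + a.2 ^ 2)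

/-- Line projection at angle θ: `L_θ[Y](t) = ∫ Y(s·u_θ + t·u_θ^⊥) ds`. -/
def lineProj (Y : ℝ × ℝ → ℝ) (θ t : ℝ) : ℝ := ∫ s : ℝ, Y (s • uvec θ + t • uperp θ)
/-- Signed Dirac measure at `w`. -/
def diracS (w : ℝ × ℝ) : SignedMeasure (ℝ × ℝ) := (Measure.dirac w).toSignedMeasure

/-- Integral of a function against a finite signed measure (via Jordan decomposition);
used to define the convolution `(D ∗ X)(y) = ∫ D(y - w) dX(w)`. -/
def sInt (X : SignedMeasure (ℝ × ℝ)) (f : ℝ × ℝ → ℝ) : ℝ :=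
  (∫ w, f w ∂X.toJordanDecomposition.posPart) - ∫ w, f w ∂X.toJordanDecomposition.negPart

lemma decomp (θ s t : ℝ) (w : ℝ × ℝ) :
    s • uvec θ + t • uperp θ - w
      = (s - dot2 (uvec θ) w) • uvec θ + (t - dot2 (uperp θ) w) • uperp θ := by
  have h := Real.sin_sq_add_cos_sq θ
  ext
  · simp only [uvec, uperp, dot2, Prod.fst_add, Prod.smul_fst, Prod.fst_sub, smul_eq_mul]
    linear_combination w.1 * h
  · simp only [uvec, uperp, dot2, Prod.snd_add, Prod.smul_snd, Prod.snd_sub, smul_eq_mul]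
    linear_combination w.2 * h

lemma sumsq (θ s t : ℝ) :
    (s • uvec θ + t • uperp θ).1 ^ 2 + (s • uvec θ + t • uperp θ).2 ^ 2 = s ^ 2 + t ^ 2 := by
  have h := Real.sin_sq_add_cos_sq θ
  simp only [uvec, uperp, Prod.fst_add, Prod.smul_fst, Prod.snd_add, Prod.smul_snd, smul_eq_mul]
  linear_combination (s ^ 2 + t ^ 2) * h

lemma line_shift (D : ℝ × ℝ → ℝ) (θ t : ℝ) (w : ℝ × ℝ) :
    (∫ s : ℝ, D (s • uvec θ + t • uperp θ - w)) = lineProj D θ (t - dot2 (uperp θ) w) := by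
  simp_rw [decomp θ _ t w]
  rw [lineProj]
  exact integral_sub_right_eq_self (fun s => D (s • uvec θ + (t - dot2 (uperp θ) w) • uperp θ))
    (dot2 (uvec θ) w)

lemma exists_dom_bound {D : ℝ × ℝ → ℝ} (hDc : Continuous D) (hDs : HasCompactSupport D) : ∃ b : ℝ → ℝ, Integrable b volume ∧ (∀ s, 0 ≤ b s) ∧
    ∀ (θ t s : ℝ), ‖D (s • uvec θ + t • uperp θ)‖ ≤ b s := by
  obtain ⟨C, hC⟩ := hDc.bounded_above_of_compact_support hDs
  have hC0 : 0 ≤ C := le_trans (norm_nonneg _) (hC 0)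
  obtain ⟨R, hR0, hsupp⟩ := hDs.isBounded.subset_closedBall_lt 0 0
  have hDz : ∀ y : ℝ × ℝ, R < ‖y‖ → D y = 0 := by
    intro y hy
    refine image_eq_zero_of_notMem_tsupport fun hmem => ?_
    have := hsupp hmem
    rw [Metric.mem_closedBall, dist_zero_right] at this
    linarith
  set R' := Real.sqrt 2 * R with hR'
  refine ⟨(Set.Icc (-R') R').indicator fun _ => C, ?_, ?_, ?_⟩
  · rw [integrable_indicator_iff measurableSet_Icc]
    exact integrableOn_const measure_Icc_lt_top.ne
  · intro s
    exact Set.indicator_apply_nonneg fun _ => hC0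
  · intro θ t s
    by_cases hs : s ∈ Set.Icc (-R') R'
    · rw [Set.indicator_of_mem hs]; exact hC _
    · rw [Set.indicator_of_notMem hs]
      have habs : R' < |s| := by
        rw [Set.mem_Icc, not_and_or, not_le, not_le] at hs
        rcases hs with h | h
        · rw [abs_of_neg (by nlinarith [Real.sqrt_nonneg 2])]; linarith
        · rw [abs_of_pos (by nlinarith [Real.sqrt_nonneg 2])]; exact h
      have hz : D (s • uvec θ + t • uperp θ) = 0 := by
        apply hDz
        set p := s • uvec θ + t • uperp θ with hp
        have h1 : |p.1| ≤ ‖p‖ := by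
          simpa [Real.norm_eq_abs] using norm_fst_le p
        have h2 : |p.2| ≤ ‖p‖ := by
          simpa [Real.norm_eq_abs] using norm_snd_le p
        have hss : p.1 ^ 2 + p.2 ^ 2 = s ^ 2 + t ^ 2 := sumsq θ s t
        have h2R : R' ^ 2 = 2 * R ^ 2 := by
          rw [hR', mul_pow, Real.sq_sqrt (by norm_num : (2:ℝ) ≥ 0)]
        by_contra hcon
        push_neg at hcon
        have hR'nn : 0 ≤ R' := mul_nonneg (Real.sqrt_nonneg 2) hR0.le
        have e1 : p.1 ^ 2 ≤ ‖p‖ ^ 2 := by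
          nlinarith [mul_self_le_mul_self (abs_nonneg p.1) h1, sq_abs p.1]
        have e2 : p.2 ^ 2 ≤ ‖p‖ ^ 2 := by
          nlinarith [mul_self_le_mul_self (abs_nonneg p.2) h2, sq_abs p.2]
        have e3 : R' ^ 2 < s ^ 2 := by
          nlinarith [mul_self_lt_mul_self hR'nn habs, sq_abs s]
        have e4 : ‖p‖ ^ 2 ≤ R ^ 2 := by
          nlinarith [mul_self_le_mul_self (norm_nonneg p) hcon]
        nlinarith [sq_nonneg t]
      rw [hz]; simp

lemma dot2_cont (a : ℝ × ℝ) : Continuous fun w : ℝ × ℝ => dot2 a w := by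
  unfold dot2
  fun_prop

lemma inner_cont (θ t : ℝ) : Continuous fun s : ℝ => s • uvec θ + t • uperp θ :=
  (continuous_id.smul continuous_const).add continuous_const

lemma sec_int {D : ℝ × ℝ → ℝ} (hDc : Continuous D) (hDs : HasCompactSupport D) (θ t : ℝ) :
    Integrable (fun s : ℝ => D (s • uvec θ + t • uperp θ)) := by
  obtain ⟨b, hbi, _, hb⟩ := exists_dom_bound hDc hDs
  exact hbi.mono' ((hDc.comp (inner_cont θ t)).aestronglyMeasurable)
    (Filter.Eventually.of_forall (hb θ t))

lemma lineProj_cont {D : ℝ × ℝ → ℝ} (hDc : Continuous D) (hDs : HasCompactSupport D) (θ : ℝ) :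
    Continuous (lineProj D θ) := by
  obtain ⟨b, hbi, _, hb⟩ := exists_dom_bound hDc hDs
  refine continuous_of_dominated (fun t => ?_) (fun t => Filter.Eventually.of_forall (hb θ t))
    hbi (Filter.Eventually.of_forall fun s => ?_)
  · exact (hDc.comp (inner_cont θ t)).aestronglyMeasurable
  · exact hDc.comp (by fun_prop : Continuous fun x : ℝ => s • uvec θ + x • uperp θ)

lemma lineProj_bound {D : ℝ × ℝ → ℝ} (hDc : Continuous D) (hDs : HasCompactSupport D) :
    ∃ M : ℝ, 0 ≤ M ∧ ∀ (θ t : ℝ), |lineProj D θ t| ≤ M := by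
  obtain ⟨b, hbi, hb0, hb⟩ := exists_dom_bound hDc hDs
  refine ⟨∫ s, b s, integral_nonneg hb0, fun θ t => ?_⟩
  simpa [Real.norm_eq_abs, lineProj] using
    norm_integral_le_of_norm_le hbi (Filter.Eventually.of_forall (hb θ t))

lemma shifted_sec_int {D : ℝ × ℝ → ℝ} (hDc : Continuous D) (hDs : HasCompactSupport D)
    (θ t : ℝ) (w : ℝ × ℝ) :
    Integrable (fun s : ℝ => D (s • uvec θ + t • uperp θ - w)) := by
  simp_rw [decomp θ _ t w]
  exact (sec_int hDc hDs θ (t - dot2 (uperp θ) w)).comp_sub_right (dot2 (uvec θ) w)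

lemma prod_int {D : ℝ × ℝ → ℝ} (hDc : Continuous D) (hDs : HasCompactSupport D)
    (μ : Measure (ℝ × ℝ)) [IsFiniteMeasure μ] (θ t : ℝ) :
    Integrable (fun p : (ℝ × ℝ) × ℝ => D (p.2 • uvec θ + t • uperp θ - p.1))
      (μ.prod volume) := by
  have hmeas : Continuous fun p : (ℝ × ℝ) × ℝ => D (p.2 • uvec θ + t • uperp θ - p.1) := by
    apply hDc.comp
    exact ((continuous_snd.smul continuous_const).add continuous_const).sub continuous_fst
  rw [integrable_prod_iff hmeas.aestronglyMeasurable]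
  constructor
  · exact Filter.Eventually.of_forall fun w => shifted_sec_int hDc hDs θ t w
  · have hn : ∀ w : ℝ × ℝ, (∫ s, ‖D (s • uvec θ + t • uperp θ - w)‖) =
        lineProj (fun y => ‖D y‖) θ (t - dot2 (uperp θ) w) := fun w =>
      line_shift (fun y => ‖D y‖) θ t w
    simp_rw [hn]
    obtain ⟨M, hM0, hM⟩ := lineProj_bound hDc.norm hDs.norm
    refine (integrable_const M).mono' ?_ (Filter.Eventually.of_forall fun w => ?_)
    · exact ((lineProj_cont hDc.norm hDs.norm θ).comp
        (continuous_const.sub (dot2_cont _))).aestronglyMeasurable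
    · simpa [Real.norm_eq_abs] using hM θ (t - dot2 (uperp θ) w)

lemma conv_swap {D : ℝ × ℝ → ℝ} (hDc : Continuous D) (hDs : HasCompactSupport D)
    (μ : Measure (ℝ × ℝ)) [IsFiniteMeasure μ] (θ t : ℝ) :
    (∫ s : ℝ, ∫ w, D (s • uvec θ + t • uperp θ - w) ∂μ) =
      ∫ w, lineProj D θ (t - dot2 (uperp θ) w) ∂μ := by
  have hF := prod_int hDc hDs μ θ t
  have hswap := integral_integral_swap (f := fun (w : ℝ × ℝ) (s : ℝ) =>
    D (s • uvec θ + t • uperp θ - w)) (μ := μ) (ν := volume) hF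
  rw [← hswap]
  exact integral_congr_ae (Filter.Eventually.of_forall fun w => line_shift D θ t w)

lemma conv_int {D : ℝ × ℝ → ℝ} (hDc : Continuous D) (hDs : HasCompactSupport D)
    (μ : Measure (ℝ × ℝ)) [IsFiniteMeasure μ] (θ t : ℝ) :
    Integrable (fun s : ℝ => ∫ w, D (s • uvec θ + t • uperp θ - w) ∂μ) volume :=
  (prod_int hDc hDs μ θ t).integral_prod_right

lemma integrable_bdd {f : ℝ × ℝ → ℝ} (hf : Continuous f) {C : ℝ} (hb : ∀ x, |f x| ≤ C)
    (μ : Measure (ℝ × ℝ)) [IsFiniteMeasure μ] : Integrable f μ :=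
  (integrable_const C).mono' hf.aestronglyMeasurable
    (Filter.Eventually.of_forall fun x => by simpa [Real.norm_eq_abs] using hb x)

lemma measure_decomp_unique {μ ν μ' ν' : Measure (ℝ × ℝ)} [IsFiniteMeasure μ] [IsFiniteMeasure ν]
    [IsFiniteMeasure μ'] [IsFiniteMeasure ν']
    (h : μ.toSignedMeasure - ν.toSignedMeasure = μ'.toSignedMeasure - ν'.toSignedMeasure) :
    μ + ν' = μ' + ν := by
  rw [← Measure.toSignedMeasure_eq_toSignedMeasure_iff, Measure.toSignedMeasure_add,
    Measure.toSignedMeasure_add]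
  rw [sub_eq_sub_iff_add_eq_add] at h
  exact h

lemma jordan_apply (X : SignedMeasure (ℝ × ℝ)) {i : Set (ℝ × ℝ)} (hi : MeasurableSet i) :
    X i = (X.toJordanDecomposition.posPart i).toReal -
      (X.toJordanDecomposition.negPart i).toReal := by
  conv_lhs => rw [← X.toSignedMeasure_toJordanDecomposition]
  rw [MeasureTheory.JordanDecomposition.toSignedMeasure, MeasureTheory.VectorMeasure.sub_apply,
    Measure.toSignedMeasure_apply_measurable hi, Measure.toSignedMeasure_apply_measurable hi]
  simp only [Measure.real]

lemma sInt_eq_decomp {X : SignedMeasure (ℝ × ℝ)} {μ ν : Measure (ℝ × ℝ)}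
    [IsFiniteMeasure μ] [IsFiniteMeasure ν]
    (h : X = μ.toSignedMeasure - ν.toSignedMeasure) {f : ℝ × ℝ → ℝ} {C : ℝ}
    (hfc : Continuous f) (hfb : ∀ x, |f x| ≤ C) :
    sInt X f = (∫ w, f w ∂μ) - ∫ w, f w ∂ν := by
  have hX : X.toJordanDecomposition.posPart.toSignedMeasure -
      X.toJordanDecomposition.negPart.toSignedMeasure =
      μ.toSignedMeasure - ν.toSignedMeasure := by
    rw [← h]
    conv_rhs => rw [← X.toSignedMeasure_toJordanDecomposition]
    rw [MeasureTheory.JordanDecomposition.toSignedMeasure]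
  have hmeq := measure_decomp_unique hX
  have hint : (∫ w, f w ∂X.toJordanDecomposition.posPart) + ∫ w, f w ∂ν =
      (∫ w, f w ∂μ) + ∫ w, f w ∂X.toJordanDecomposition.negPart := by
    rw [← integral_add_measure (integrable_bdd hfc hfb _) (integrable_bdd hfc hfb _),
      ← integral_add_measure (integrable_bdd hfc hfb _) (integrable_bdd hfc hfb _), hmeq]
  rw [sInt]
  linarith

lemma abs_integral_le {μ : Measure (ℝ × ℝ)} [IsFiniteMeasure μ] {f : ℝ × ℝ → ℝ}
    (hfb : ∀ x, |f x| ≤ 1) : |∫ w, f w ∂μ| ≤ (μ Set.univ).toReal := by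
  have := norm_integral_le_of_norm_le (μ := μ) (f := f) (g := fun _ => (1:ℝ))
    (integrable_const 1) (Filter.Eventually.of_forall fun x => by
      simpa [Real.norm_eq_abs] using hfb x)
  simpa [Real.norm_eq_abs, integral_const, smul_eq_mul, Measure.real] using this

lemma tv_univ_toReal (X : SignedMeasure (ℝ × ℝ)) :
    (X.totalVariation Set.univ).toReal =
      (X.toJordanDecomposition.posPart Set.univ).toReal +
      (X.toJordanDecomposition.negPart Set.univ).toReal := by
  rw [MeasureTheory.SignedMeasure.totalVariation, Measure.add_apply,
    ENNReal.toReal_add (measure_ne_top _ _) (measure_ne_top _ _)]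

lemma sInt_bound (X : SignedMeasure (ℝ × ℝ)) {f : ℝ × ℝ → ℝ}
    (hfb : ∀ x, |f x| ≤ 1) :
    |sInt X f| ≤ (X.totalVariation Set.univ).toReal := by
  rw [sInt, tv_univ_toReal]
  have h1 := abs_integral_le (μ := X.toJordanDecomposition.posPart) hfb
  have h2 := abs_integral_le (μ := X.toJordanDecomposition.negPart) hfb
  calc |(∫ w, f w ∂X.toJordanDecomposition.posPart) - ∫ w, f w ∂X.toJordanDecomposition.negPart|
      ≤ |∫ w, f w ∂X.toJordanDecomposition.posPart| +
        |∫ w, f w ∂X.toJordanDecomposition.negPart| := abs_sub _ _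
    _ ≤ _ := add_le_add h1 h2

lemma sInt_sum {ι : Type*} (X : SignedMeasure (ℝ × ℝ)) (s : Finset ι) (F : ι → ℝ × ℝ → ℝ)
    (hF : ∀ i ∈ s, Continuous (F i) ∧ ∃ C, ∀ x, |F i x| ≤ C) :
    sInt X (fun w => ∑ i ∈ s, F i w) = ∑ i ∈ s, sInt X (F i) := by
  have hint : ∀ (μ : Measure (ℝ × ℝ)), IsFiniteMeasure μ → ∀ i ∈ s, Integrable (F i) μ := by
    intro μ hμ i hi
    obtain ⟨hc, C, hC⟩ := hF i hi
    exact @integrable_bdd _ hc C hC μ hμ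
  rw [sInt, integral_finset_sum s (hint _ inferInstance),
    integral_finset_sum s (hint _ inferInstance), ← Finset.sum_sub_distrib]
  rfl

lemma sInt_const_mul (X : SignedMeasure (ℝ × ℝ)) (c : ℝ) (f : ℝ × ℝ → ℝ) :
    sInt X (fun w => c * f w) = c * sInt X f := by
  rw [sInt, sInt, integral_const_mul, integral_const_mul]
  ring

lemma tv_le_of_decomp (X : SignedMeasure (ℝ × ℝ)) (μ ν : Measure (ℝ × ℝ))
    [IsFiniteMeasure μ] [IsFiniteMeasure ν]
    (h : X = μ.toSignedMeasure - ν.toSignedMeasure) :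
    (X.totalVariation Set.univ).toReal ≤ (μ Set.univ).toReal + (ν Set.univ).toReal := by
  obtain ⟨A, hA, hpA, hnA⟩ := X.toJordanDecomposition.mutuallySingular
  set p := X.toJordanDecomposition.posPart with hp
  set n := X.toJordanDecomposition.negPart with hn
  have hXap : ∀ i : Set (ℝ × ℝ), MeasurableSet i →
      X i = (μ i).toReal - (ν i).toReal := by
    intro i hi
    rw [h, MeasureTheory.VectorMeasure.sub_apply,
      Measure.toSignedMeasure_apply_measurable hi, Measure.toSignedMeasure_apply_measurable hi]
    simp only [Measure.real]
  have hpuniv : p Set.univ = p Aᶜ := by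
    rw [← measure_add_measure_compl hA, hpA, zero_add]
  have hnuniv : n Set.univ = n A := by
    rw [← measure_add_measure_compl hA, hnA, add_zero]
  have h1 : X Aᶜ = (p Set.univ).toReal := by
    rw [jordan_apply X hA.compl, ← hp, ← hn, hnA, hpuniv]
    simp
  have h2 : X A = -(n Set.univ).toReal := by
    rw [jordan_apply X hA, ← hp, ← hn, hpA, hnuniv]
    simp
  have h3 : X Aᶜ ≤ (μ Set.univ).toReal := by
    rw [hXap Aᶜ hA.compl]
    have := ENNReal.toReal_mono (measure_ne_top μ _) (measure_mono (Set.subset_univ Aᶜ))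
    have hν : (0:ℝ) ≤ (ν Aᶜ).toReal := ENNReal.toReal_nonneg
    linarith
  have h4 : -X A ≤ (ν Set.univ).toReal := by
    rw [hXap A hA]
    have := ENNReal.toReal_mono (measure_ne_top ν _) (measure_mono (Set.subset_univ A))
    have hμ' : (0:ℝ) ≤ (μ A).toReal := ENNReal.toReal_nonneg
    linarith
  rw [tv_univ_toReal, ← hp, ← hn]
  linarith [h1, h2, h3, h4]

lemma key_swap {D : ℝ × ℝ → ℝ} (hDc : Continuous D) (hDs : HasCompactSupport D)
    (X : SignedMeasure (ℝ × ℝ)) (θ t : ℝ) :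
    lineProj (fun y => sInt X (fun w => D (y - w))) θ t =
      sInt X (fun w => lineProj D θ (t - dot2 (uperp θ) w)) := by
  have hp := conv_swap hDc hDs X.toJordanDecomposition.posPart θ t
  have hn := conv_swap hDc hDs X.toJordanDecomposition.negPart θ t
  rw [lineProj]
  simp only [sInt]
  rw [integral_sub (conv_int hDc hDs _ θ t) (conv_int hDc hDs _ θ t), hp, hn]

lemma isFinite_sum_smul_dirac (W : Finset (ℝ × ℝ)) (c : ℝ × ℝ → NNReal) :
    IsFiniteMeasure (∑ w ∈ W, c w • Measure.dirac w) := by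
  constructor
  rw [Measure.finset_sum_apply]
  refine (ENNReal.sum_lt_top).2 fun w _ => ?_
  simp [Measure.smul_apply]

lemma nnsmul_signed (c : NNReal) (Y : SignedMeasure (ℝ × ℝ)) :
    c • Y = (c : ℝ) • Y := by
  ext i _
  simp [MeasureTheory.VectorMeasure.smul_apply, NNReal.smul_def]

lemma smul_diracS (a : ℝ) (w : ℝ × ℝ) :
    a • diracS w = (a.toNNReal • Measure.dirac w).toSignedMeasure -
      ((-a).toNNReal • Measure.dirac w).toSignedMeasure := by
  rcases le_total 0 a with ha | ha
  · have h2 : ((-a).toNNReal • Measure.dirac w) = (0 : Measure (ℝ × ℝ)) := by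
      rw [Real.toNNReal_of_nonpos (by linarith : -a ≤ 0), zero_smul]
    rw [Measure.toSignedMeasure_congr h2, Measure.toSignedMeasure_zero, sub_zero,
      Measure.toSignedMeasure_smul, nnsmul_signed, Real.coe_toNNReal a ha, diracS]
  · have h2 : (a.toNNReal • Measure.dirac w) = (0 : Measure (ℝ × ℝ)) := by
      rw [Real.toNNReal_of_nonpos ha, zero_smul]
    rw [Measure.toSignedMeasure_congr h2, Measure.toSignedMeasure_zero, zero_sub,
      Measure.toSignedMeasure_smul, nnsmul_signed, Real.coe_toNNReal (-a) (by linarith), diracS]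
    ext i _
    simp [MeasureTheory.VectorMeasure.smul_apply, MeasureTheory.VectorMeasure.neg_apply]
    split_ifs <;> ring

lemma sum_dirac_decomp (W : Finset (ℝ × ℝ)) (α : ℝ × ℝ → ℝ) :
    (∑ w ∈ W, α w • diracS w) =
      @Measure.toSignedMeasure _ _ (∑ w ∈ W, (α w).toNNReal • Measure.dirac w)
        (isFinite_sum_smul_dirac W _) -
      @Measure.toSignedMeasure _ _ (∑ w ∈ W, (-(α w)).toNNReal • Measure.dirac w)
        (isFinite_sum_smul_dirac W _) := by
  classical
  induction W using Finset.induction_on with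
  | empty => simp
  | insert a s ha ih =>
    haveI i1 := isFinite_sum_smul_dirac s (fun w => (α w).toNNReal)
    haveI i2 := isFinite_sum_smul_dirac s (fun w => (-(α w)).toNNReal)
    have e1 : (∑ w ∈ insert a s, (α w).toNNReal • Measure.dirac w) =
        ((α a).toNNReal • Measure.dirac a) + ∑ w ∈ s, (α w).toNNReal • Measure.dirac w :=
      Finset.sum_insert ha
    have e2 : (∑ w ∈ insert a s, (-(α w)).toNNReal • Measure.dirac w) =
        ((-(α a)).toNNReal • Measure.dirac a) + ∑ w ∈ s, (-(α w)).toNNReal • Measure.dirac w :=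
      Finset.sum_insert ha
    rw [Finset.sum_insert ha, Measure.toSignedMeasure_congr e1, Measure.toSignedMeasure_congr e2,
      Measure.toSignedMeasure_add, Measure.toSignedMeasure_add, smul_diracS, ih]
    abel

lemma integral_sum_smul_dirac (W : Finset (ℝ × ℝ)) (c : ℝ × ℝ → NNReal) {f : ℝ × ℝ → ℝ} {C : ℝ}
    (hfc : Continuous f) (hfb : ∀ x, |f x| ≤ C) :
    ∫ w, f w ∂(∑ w ∈ W, c w • Measure.dirac w) = ∑ w ∈ W, (c w : ℝ) * f w := by
  rw [integral_finset_sum_measure (fun i _ => integrable_bdd hfc hfb _)]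
  refine Finset.sum_congr rfl fun w _ => ?_
  rw [integral_smul_nnreal_measure, integral_dirac]
  simp [NNReal.smul_def]

lemma sum_smul_dirac_univ (W : Finset (ℝ × ℝ)) (c : ℝ × ℝ → NNReal) :
    ((∑ w ∈ W, c w • Measure.dirac w) Set.univ).toReal = ∑ w ∈ W, (c w : ℝ) := by
  rw [Measure.finset_sum_apply, ENNReal.toReal_sum (fun w _ => ?_)]
  · refine Finset.sum_congr rfl fun w _ => ?_
    simp [Measure.smul_apply]
  · simp [Measure.smul_apply]

/-- optimality of `X₀` for TV minimization under line-scan constraints,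
given a dual certificate. -/
theorem tv_min_optimality
    (m : ℕ) (hm : 0 < m) (θ : Fin m → ℝ)
    (D : ℝ × ℝ → ℝ) (hD_cont : Continuous D) (hD_supp : HasCompactSupport D)
    (f : ℝ → ℝ) (hD_circ : ∀ w, D w = f (norm2 w))
    (W : Finset (ℝ × ℝ)) (α : ℝ × ℝ → ℝ) (hα : ∀ w ∈ W, α w ≠ 0)
    (X₀ : SignedMeasure (ℝ × ℝ)) (hX₀ : X₀ = ∑ w ∈ W, α w • diracS w)
    (R : Fin m → ℝ → ℝ)
    (hR : ∀ i t, R i t =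
      (1 / Real.sqrt m) * lineProj (fun y => sInt X₀ (fun w => D (y - w))) (θ i) t)
    (J : Fin m → ℕ) (tloc : (i : Fin m) → Fin (J i) → ℝ) (q : (i : Fin m) → Fin (J i) → ℝ)
    (g : ℝ × ℝ → ℝ)
    (hg : ∀ w, g w = (1 / Real.sqrt m) *
      ∑ i, ∑ j, q i j * lineProj D (θ i) (tloc i j - dot2 (uperp (θ i)) w))
    (hgW : ∀ w ∈ W, g w = Real.sign (α w))
    (hg1 : ∀ w, |g w| ≤ 1) :
    (X₀.totalVariation Set.univ).toReal = ∑ w ∈ W, |α w| ∧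
    ∀ X : SignedMeasure (ℝ × ℝ),
      (∀ i t, lineProj (fun y => sInt X (fun w => D (y - w))) (θ i) t = Real.sqrt m * R i t) →
      (X.totalVariation Set.univ).toReal ≥ (X₀.totalVariation Set.univ).toReal := by
  have hsqm : (0:ℝ) < Real.sqrt m := Real.sqrt_pos.2 (by exact_mod_cast hm)
  obtain ⟨M, hM0, hM⟩ := lineProj_bound hD_cont hD_supp
  set P : (i : Fin m) → Fin (J i) → ℝ × ℝ → ℝ :=
    fun i j w => lineProj D (θ i) (tloc i j - dot2 (uperp (θ i)) w) with hP
  have hPc : ∀ i j, Continuous (P i j) := fun i j =>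
    (lineProj_cont hD_cont hD_supp (θ i)).comp (continuous_const.sub (dot2_cont _))
  have hPb : ∀ i j w, |P i j w| ≤ M := fun i j w => hM _ _
  have hgfun : g = fun w => (1 / Real.sqrt m) * ∑ i, ∑ j, q i j * P i j w := funext hg
  have hgc : Continuous g := by
    rw [hgfun]
    exact continuous_const.mul (continuous_finset_sum _ fun i _ =>
      continuous_finset_sum _ fun j _ => continuous_const.mul (hPc i j))
  -- sInt of g against any signed measure
  have hsIntg : ∀ Y : SignedMeasure (ℝ × ℝ),
      sInt Y g = (1 / Real.sqrt m) * ∑ i, ∑ j, q i j * sInt Y (P i j) := by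
    intro Y
    rw [hgfun, sInt_const_mul]
    congr 1
    rw [sInt_sum Y Finset.univ (fun i w => ∑ j, q i j * P i j w) (fun i _ => ?_)]
    · refine Finset.sum_congr rfl fun i _ => ?_
      rw [sInt_sum Y Finset.univ (fun j w => q i j * P i j w) (fun j _ =>
        ⟨continuous_const.mul (hPc i j), |q i j| * M, fun x => by
          rw [abs_mul]
          exact mul_le_mul_of_nonneg_left (hPb i j x) (abs_nonneg _)⟩)]
      exact Finset.sum_congr rfl fun j _ => sInt_const_mul Y (q i j) (P i j)
    · refine ⟨continuous_finset_sum _ fun j _ => continuous_const.mul (hPc i j),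
        ∑ j, |q i j| * M, fun x => ?_⟩
      refine (Finset.abs_sum_le_sum_abs _ _).trans (Finset.sum_le_sum fun j _ => ?_)
      rw [abs_mul]
      exact mul_le_mul_of_nonneg_left (hPb i j x) (abs_nonneg _)
  -- decomposition of X₀
  haveI i1 := isFinite_sum_smul_dirac W (fun w => (α w).toNNReal)
  haveI i2 := isFinite_sum_smul_dirac W (fun w => (-(α w)).toNNReal)
  have hdec : X₀ = (∑ w ∈ W, (α w).toNNReal • Measure.dirac w).toSignedMeasure -
      (∑ w ∈ W, (-(α w)).toNNReal • Measure.dirac w).toSignedMeasure :=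
    hX₀.trans (sum_dirac_decomp W α)
  have hsInt₀ : ∀ (f : ℝ × ℝ → ℝ) (C : ℝ), Continuous f → (∀ x, |f x| ≤ C) →
      sInt X₀ f = ∑ w ∈ W, α w * f w := by
    intro f C hfc hfb
    rw [sInt_eq_decomp hdec hfc hfb, integral_sum_smul_dirac _ _ hfc hfb,
      integral_sum_smul_dirac _ _ hfc hfb, ← Finset.sum_sub_distrib]
    refine Finset.sum_congr rfl fun w _ => ?_
    rw [Real.coe_toNNReal' (α w), Real.coe_toNNReal' (-(α w))]
    rcases le_total 0 (α w) with h | h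
    · rw [max_eq_left h, max_eq_right (by linarith)]; ring
    · rw [max_eq_right h, max_eq_left (by linarith)]; ring
  -- value of the certificate integral
  have hval : sInt X₀ g = ∑ w ∈ W, |α w| := by
    rw [hsInt₀ g 1 hgc hg1]
    refine Finset.sum_congr rfl fun w hw => ?_
    rw [hgW w hw]
    rcases (hα w hw).lt_or_gt with h | h
    · rw [Real.sign_of_neg h, abs_of_neg h]; ring
    · rw [Real.sign_of_pos h, abs_of_pos h]; ring
  have habs : (0:ℝ) ≤ ∑ w ∈ W, |α w| := Finset.sum_nonneg fun w _ => abs_nonneg _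
  -- part 1
  have htv : (X₀.totalVariation Set.univ).toReal = ∑ w ∈ W, |α w| := by
    have hle : (X₀.totalVariation Set.univ).toReal ≤ ∑ w ∈ W, |α w| := by
      refine (tv_le_of_decomp X₀ _ _ hdec).trans_eq ?_
      rw [sum_smul_dirac_univ, sum_smul_dirac_univ, ← Finset.sum_add_distrib]
      refine Finset.sum_congr rfl fun w _ => ?_
      rw [Real.coe_toNNReal' (α w), Real.coe_toNNReal' (-(α w))]
      rcases le_total 0 (α w) with h | h
      · rw [max_eq_left h, max_eq_right (by linarith), abs_of_nonneg h]; ring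
      · rw [max_eq_right h, max_eq_left (by linarith), abs_of_nonpos h]; ring
    have hge := sInt_bound X₀ hg1
    rw [hval, abs_of_nonneg habs] at hge
    linarith
  refine ⟨htv, fun X hX => ?_⟩
  -- constraint implies equality of certificate integrals
  have hPeq : ∀ i j, sInt X (P i j) = sInt X₀ (P i j) := by
    intro i j
    have h1 := hX i (tloc i j)
    rw [hR i (tloc i j), ← mul_assoc, mul_one_div, div_self (ne_of_gt hsqm), one_mul] at h1
    have h2 := key_swap hD_cont hD_supp X (θ i) (tloc i j)
    have h3 := key_swap hD_cont hD_supp X₀ (θ i) (tloc i j)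
    rw [h2] at h1
    rw [h3] at h1
    exact h1
  have hXg : sInt X g = ∑ w ∈ W, |α w| := by
    rw [hsIntg X, ← hval, hsIntg X₀]
    congr 1
    exact Finset.sum_congr rfl fun i _ => Finset.sum_congr rfl fun j _ => by rw [hPeq i j]
  have := sInt_bound X hg1
  rw [hXg, abs_of_nonneg habs] at this
  rw [htv]
  linarith
end
end

section
/- Let 0 < C < 1, let k ≥ 2, let D : ℝ² → ℝ be continuous, circularly symmetric, nonnegative, not identically zero, and supported in the closed ball of radius r > 0 centered at the origin, and let X₀ = ∑_{j=1}^k α_j δ_{w_j} with α_j > 0 and pairwise separations ‖w_i − w_j‖₂ ≥ (2/C)·k²·r for all i ≠ j. Let θ₁, θ₂, θ₃ be independent and uniformly distributed on [−π, π). Then, with probability at least 1 − C over (θ₁, θ₂, θ₃), the measure X₀ is the unique minimizer of total variation among all finitely-atomic signed Borel measures X on ℝ² satisfying L_{θᵢ}[D∗X](t) = L_{θᵢ}[D∗X₀](t) for i = 1, 2, 3 and all t ∈ ℝ. -/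
noncomputable section
open MeasureTheory

/-- Uniform probability measure on `[-π, π)`. -/
def unif : Measure ℝ :=
  (ENNReal.ofReal (1 / (2 * Real.pi))) • (volume.restrict (Set.Ico (-Real.pi) Real.pi))

/-!
For a circularly symmetric `D`, the line projection at angle `θ` of `D ∗ ∑ aᵥ δᵥ` is
`t ↦ ∑ aᵥ g (t - ⟪v, u_θ^⊥⟫)` for a single profile `g`, and translates of a nonzero `g` whose
support is bounded above are linearly independent (look at the rightmost translate). Hence equal
projections force equal masses on every scan line. In the first direction this gives
`X(ℝ²) = ∑ αⱼ = |X₀|(ℝ²)`, so `|X|(ℝ²) ≥ |X₀|(ℝ²)`, with equality only if `X ≥ 0`. A nonnegative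
`X` can only charge points lying, in each of the three directions, on a scan line through an atom
of `X₀`. Outside a null set of angle triples (a finite union of zero sets of nontrivial sinusoids
in one of the angles) such points are atoms of `X₀` and the first direction separates the atoms,
so `X = X₀`. Recovery thus holds with probability one.
-/

lemma dot2_uperp (d : ℝ × ℝ) (θ : ℝ) :
    dot2 d (uperp θ) = d.1 * Real.sin θ - d.2 * Real.cos θ := by
  simp only [dot2, uperp]; ring

lemma dot2_sub_left (a b u : ℝ × ℝ) : dot2 (a - b) u = dot2 a u - dot2 b u := by
  simp only [dot2, Prod.fst_sub, Prod.snd_sub]; ring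

lemma dot2_uvec_uperp (θ₀ θ₁ : ℝ) : dot2 (uvec θ₀) (uperp θ₁) = Real.sin (θ₁ - θ₀) := by
  rw [dot2_uperp, Real.sin_sub]; simp only [uvec]; ring

lemma uvec_ne_zero (θ : ℝ) : uvec θ ≠ 0 := fun h => by
  have := Real.cos_sq_add_sin_sq θ
  simp_all [uvec, Prod.ext_iff]

lemma abs_fst_le_norm2 (a : ℝ × ℝ) : |a.1| ≤ norm2 a :=
  Real.abs_le_sqrt (le_add_of_nonneg_right (sq_nonneg _))

lemma abs_snd_le_norm2 (a : ℝ × ℝ) : |a.2| ≤ norm2 a :=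
  Real.abs_le_sqrt (le_add_of_nonneg_left (sq_nonneg _))

lemma norm2_rotate (θ s t : ℝ) (v : ℝ × ℝ) :
    norm2 (s • uvec θ + t • uperp θ - v) = norm2 (s - dot2 v (uvec θ), t - dot2 v (uperp θ)) := by
  simp only [norm2, uvec, uperp, dot2, Prod.smul_mk, smul_eq_mul, Prod.mk_add_mk, Prod.fst_sub,
    Prod.snd_sub]
  congr 1
  linear_combination (s ^ 2 + t ^ 2 - v.1 ^ 2 - v.2 ^ 2) * Real.cos_sq_add_sin_sq θ

/-- The intersection point of the lines `⟪x, u_{θ₀}^⊥⟫ = c₀` and `⟪x, u_{θ₁}^⊥⟫ = c₁`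
(Cramer's rule; meaningful when `sin (θ₁ - θ₀) ≠ 0`). -/
def lineMeet (θ₀ θ₁ c₀ c₁ : ℝ) : ℝ × ℝ :=
  (Real.sin (θ₁ - θ₀))⁻¹ •
    (c₁ * Real.cos θ₀ - c₀ * Real.cos θ₁, c₁ * Real.sin θ₀ - c₀ * Real.sin θ₁)

lemma dot2_lineMeet_uperp {θ₀ θ₁ : ℝ} (h : Real.sin (θ₁ - θ₀) ≠ 0) (c₀ c₁ : ℝ) :
    dot2 (lineMeet θ₀ θ₁ c₀ c₁) (uperp θ₀) = c₀ ∧ dot2 (lineMeet θ₀ θ₁ c₀ c₁) (uperp θ₁) = c₁ := by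
  rw [Real.sin_sub] at h
  simp only [lineMeet, dot2_uperp, Prod.smul_fst, Prod.smul_snd, smul_eq_mul, Real.sin_sub]
  constructor <;> field_simp <;> ring

lemma eq_of_dot2_uperp_eq {θ₀ θ₁ : ℝ} (h : Real.sin (θ₁ - θ₀) ≠ 0) {x y : ℝ × ℝ}
    (h₀ : dot2 x (uperp θ₀) = dot2 y (uperp θ₀)) (h₁ : dot2 x (uperp θ₁) = dot2 y (uperp θ₁)) :
    x = y := by
  rw [Real.sin_sub] at h
  rw [← sub_eq_zero, ← dot2_sub_left, dot2_uperp] at h₀ h₁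
  rw [← sub_eq_zero]
  refine Prod.ext ((mul_eq_zero.1 ?_).resolve_right h) ((mul_eq_zero.1 ?_).resolve_right h)
  · linear_combination Real.cos θ₀ * h₁ - Real.cos θ₁ * h₀
  · linear_combination Real.sin θ₀ * h₁ - Real.sin θ₁ * h₀

lemma countable_setOf_dot2_uperp_eq_zero {d : ℝ × ℝ} (hd : d ≠ 0) :
    {θ : ℝ | dot2 d (uperp θ) = 0}.Countable := by
  set z : ℂ := ⟨d.1, d.2⟩
  have hz : ‖z‖ ≠ 0 := norm_ne_zero_iff.2 fun h =>
    hd (Prod.ext (congrArg Complex.re h) (congrArg Complex.im h))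
  refine (Set.countable_range fun n : ℤ => z.arg + n * Real.pi).mono fun θ hθ => ?_
  have hsin : ‖z‖ * Real.sin (θ - z.arg) = dot2 d (uperp θ) := by
    rw [Real.sin_sub, dot2_uperp, ← show ‖z‖ * Real.cos z.arg = d.1 from z.norm_mul_cos_arg,
      ← show ‖z‖ * Real.sin z.arg = d.2 from z.norm_mul_sin_arg]
    ring
  obtain ⟨n, hn⟩ := Real.sin_eq_zero_iff.1 ((mul_eq_zero.1 (hsin.trans hθ)).resolve_left hz)
  exact ⟨n, by simp only; linarith⟩

section Atomic
variable {ι E : Type*} [MeasurableSpace E] [MeasurableSingletonClass E] {s : Finset ι}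

lemma mutuallySingular_sum_dirac {P : ι → E} (hP : Set.InjOn P s) (a : ι → ℝ) :
    (∑ i ∈ s, (a i).toNNReal • Measure.dirac (P i)) ⟂ₘ
      ∑ i ∈ s, (-a i).toNNReal • Measure.dirac (P i) := by
  classical
  set T : Finset E := (s.filter fun i => a i ≤ 0).image P
  have hT : ∀ i ∈ s, P i ∈ T ↔ a i ≤ 0 := fun i hi => by
    simp only [T, Finset.mem_image, Finset.mem_filter]
    exact ⟨fun ⟨j, ⟨hj, hja⟩, hji⟩ => hP hi hj hji.symm ▸ hja, fun ha => ⟨i, ⟨hi, ha⟩, rfl⟩⟩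
  refine ⟨T, T.measurableSet, ?_, ?_⟩ <;>
    simp only [Measure.finsetSum_apply, Measure.smul_apply, Measure.dirac_apply] <;>
    refine Finset.sum_eq_zero fun i hi => ?_
  · by_cases ha : a i ≤ 0
    · simp [Real.toNNReal_eq_zero.2 ha]
    · simp [(hT i hi).not.2 ha]
  · by_cases ha : a i ≤ 0
    · simp [(hT i hi).2 ha]
    · simp [Real.toNNReal_eq_zero.2 (by linarith : -a i ≤ 0)]

def atomicJordan (s : Finset ι) (P : ι → E) (a : ι → ℝ) (hP : Set.InjOn P s) :
    JordanDecomposition E where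
  posPart := ∑ i ∈ s, (a i).toNNReal • Measure.dirac (P i)
  negPart := ∑ i ∈ s, (-a i).toNNReal • Measure.dirac (P i)
  mutuallySingular := mutuallySingular_sum_dirac hP a

variable {P : ι → ℝ × ℝ}

lemma toJordanDecomposition_sum_smul_diracS (hP : Set.InjOn P s) (a : ι → ℝ) :
    (∑ i ∈ s, a i • diracS (P i)).toJordanDecomposition = atomicJordan s P a hP := by
  rw [← JordanDecomposition.toJordanDecomposition_toSignedMeasure (atomicJordan s P a hP)]
  congr 1
  ext A hA
  have hreal : ∀ c : ι → NNReal, (∑ i ∈ s, c i • Measure.dirac (P i)).real A =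
      ∑ i ∈ s, c i * (Measure.dirac (P i)).real A := fun c => by
    simp only [measureReal_def, Measure.finsetSum_apply, Measure.smul_apply]
    rw [ENNReal.toReal_sum fun i _ => by
      rw [ENNReal.smul_def]; exact ENNReal.mul_ne_top ENNReal.coe_ne_top (measure_ne_top _ _)]
    simp [ENNReal.toReal_smul, NNReal.smul_def]
  rw [JordanDecomposition.toSignedMeasure, Measure.toSignedMeasure_sub_apply hA]
  simp only [atomicJordan, hreal, FunLike.coe_sum, Finset.sum_apply, smul_apply,
    diracS, Measure.toSignedMeasure_apply_measurable hA, smul_eq_mul, ← Finset.sum_sub_distrib,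
    ← sub_mul, Real.coe_toNNReal', max_zero_sub_max_neg_zero_eq_self]

lemma sInt_sum_smul_diracS (hP : Set.InjOn P s) (a : ι → ℝ) (f : ℝ × ℝ → ℝ) :
    sInt (∑ i ∈ s, a i • diracS (P i)) f = ∑ i ∈ s, a i * f (P i) := by
  have hint : ∀ c : ι → NNReal, ∫ x, f x ∂(∑ i ∈ s, c i • Measure.dirac (P i)) =
      ∑ i ∈ s, c i * f (P i) := fun c => by
    rw [integral_finsetSum_measure fun i _ => (integrable_dirac (by simp)).smul_measure_nnreal]
    simp [integral_smul_nnreal_measure, integral_dirac, NNReal.smul_def]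
  rw [sInt, toJordanDecomposition_sum_smul_diracS hP]
  simp only [atomicJordan, hint, ← Finset.sum_sub_distrib, ← sub_mul, Real.coe_toNNReal',
    max_zero_sub_max_neg_zero_eq_self]

lemma totalVariation_sum_smul_diracS (hP : Set.InjOn P s) (a : ι → ℝ) :
    (∑ i ∈ s, a i • diracS (P i)).totalVariation Set.univ = ENNReal.ofReal (∑ i ∈ s, |a i|) := by
  rw [SignedMeasure.totalVariation, toJordanDecomposition_sum_smul_diracS hP]
  simp only [atomicJordan, Measure.add_apply, Measure.finsetSum_apply, Measure.smul_apply,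
    measure_univ, ENNReal.smul_def, smul_eq_mul, mul_one, ← Finset.sum_add_distrib]
  rw [ENNReal.ofReal_sum_of_nonneg fun i _ => abs_nonneg (a i)]
  refine Finset.sum_congr rfl fun i _ => ?_
  change ENNReal.ofReal (a i) + ENNReal.ofReal (-a i) = _
  rcases le_total 0 (a i) with ha | ha
  · simp [ha, abs_of_nonneg, ENNReal.ofReal_of_nonpos]
  · simp [ha, abs_of_nonpos, ENNReal.ofReal_of_nonpos]

end Atomic

def profile (D : ℝ × ℝ → ℝ) (τ : ℝ) : ℝ := ∫ s : ℝ, D (s, τ)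

section Profile
variable {D : ℝ × ℝ → ℝ} {r : ℝ}

lemma integrable_slice (hD_cont : Continuous D) (hD_supp : ∀ z, r < norm2 z → D z = 0) (τ : ℝ) :
    Integrable fun s : ℝ => D (s, τ) := by
  refine (hD_cont.comp (by fun_prop)).integrable_of_hasCompactSupport
    (HasCompactSupport.intro (isCompact_Icc (a := -r) (b := r)) fun s hs => hD_supp _ ?_)
  rw [Set.mem_Icc, not_and_or, not_le, not_le] at hs
  exact (lt_abs.2 (hs.symm.imp id fun h => by linarith)).trans_le (abs_fst_le_norm2 (s, τ))

lemma bddAbove_support_profile (hD_supp : ∀ z, r < norm2 z → D z = 0) :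
    BddAbove (Function.support (profile D)) := by
  refine ⟨r, fun τ hτ => not_lt.1 fun hrτ => hτ ?_⟩
  exact integral_eq_zero_of_ae (Filter.Eventually.of_forall fun s =>
    hD_supp _ (hrτ.trans_le ((le_abs_self τ).trans (abs_snd_le_norm2 (s, τ)))))

lemma support_profile_nonempty (hD_cont : Continuous D) (hD_nonneg : ∀ z, 0 ≤ D z)
    (hD_ne : D ≠ 0) (hD_supp : ∀ z, r < norm2 z → D z = 0) :
    (Function.support (profile D)).Nonempty := by
  obtain ⟨y, hy⟩ := Function.ne_iff.1 hD_ne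
  refine ⟨y.2, ne_of_gt ?_⟩
  rw [profile, integral_pos_iff_support_of_nonneg (fun s => hD_nonneg _)
    (integrable_slice hD_cont hD_supp _)]
  exact (isOpen_ne_fun (hD_cont.comp (by fun_prop)) continuous_const).measure_pos volume
    ⟨y.1, by simpa using hy⟩

lemma lineProj_sum_translate {f : ℝ → ℝ} (hD_circ : ∀ z, D z = f (norm2 z))
    (hD_slice : ∀ τ, Integrable fun s : ℝ => D (s, τ)) {ι : Type*} (S : Finset ι)
    (P : ι → ℝ × ℝ) (a : ι → ℝ) (θ t : ℝ) :
    lineProj (fun y => ∑ i ∈ S, a i * D (y - P i)) θ t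
      = ∑ i ∈ S, a i * profile D (t - dot2 (P i) (uperp θ)) := by
  have hrot : ∀ i s, D (s • uvec θ + t • uperp θ - P i)
      = D (s - dot2 (P i) (uvec θ), t - dot2 (P i) (uperp θ)) := fun i s => by
    rw [hD_circ, hD_circ, norm2_rotate]
  simp only [lineProj, hrot]
  rw [integral_finsetSum S fun i _ =>
    ((hD_slice _).comp_sub_right (dot2 (P i) (uvec θ))).const_mul (a i)]
  refine Finset.sum_congr rfl fun i _ => ?_
  rw [integral_const_mul, integral_sub_right_eq_self (fun s => D (s, _)), profile]

lemma lineProj_conv_sum_smul_diracS {f : ℝ → ℝ}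
    (hD_circ : ∀ z, D z = f (norm2 z)) (hD_slice : ∀ τ, Integrable fun s : ℝ => D (s, τ))
    {ι : Type*} {S : Finset ι} {P : ι → ℝ × ℝ} (hP : Set.InjOn P S) (a : ι → ℝ) (θ t : ℝ) :
    lineProj (fun y => sInt (∑ i ∈ S, a i • diracS (P i)) fun v => D (y - v)) θ t
      = ∑ i ∈ S, a i * profile D (t - dot2 (P i) (uperp θ)) := by
  simp_rw [sInt_sum_smul_diracS hP]
  exact lineProj_sum_translate hD_circ hD_slice S P a θ t

end Profile

lemma eq_zero_of_sum_mul_translate_eq_zero {g : ℝ → ℝ} (hbdd : BddAbove (Function.support g))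
    (hne : (Function.support g).Nonempty) (S : Finset ℝ) :
    ∀ h : ℝ → ℝ, (∀ t, ∑ c ∈ S, h c * g (t - c) = 0) → ∀ c ∈ S, h c = 0 := by
  classical
  set σ := sSup (Function.support g)
  induction S using Finset.induction_on_max with
  | empty => simp
  | insert m S hlt ih =>
    intro h hsum
    -- at `m + τ`, with `τ` in the support of `g` close enough to `σ`, only the translate by `m`
    -- survives
    have hev : ∀ᶠ τ in nhdsWithin σ (Set.Iic σ), ∀ c ∈ S, σ < m + τ - c :=
      eventually_nhdsWithin_of_eventually_nhds <| (Filter.eventually_all_finset S).2 fun c hc =>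
        (lt_mem_nhds (show σ - (m - c) < σ by linarith [hlt c hc])).mono fun τ hτ => by linarith
    obtain ⟨τ, hτ, hτS⟩ := ((isLUB_csSup hne hbdd).frequently_mem hne).and_eventually hev |>.exists
    have hm : h m = 0 := by
      have hvanish : ∀ c ∈ S, g (m + τ - c) = 0 := fun c hc =>
        Function.notMem_support.1 fun hmem => (hτS c hc).not_ge (le_csSup hbdd hmem)
      have := hsum (m + τ)
      rw [Finset.sum_insert (fun hm => (hlt m hm).false), Finset.sum_eq_zero fun c hc => by
        rw [hvanish c hc, mul_zero], add_zero, add_sub_cancel_left] at this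
      exact (mul_eq_zero.1 this).resolve_right hτ
    have hS : ∀ c ∈ S, h c = 0 := ih h fun t => by
      simpa [Finset.sum_insert (fun hm => (hlt m hm).false), hm] using hsum t
    simpa [hm] using hS

lemma sum_fiber_mul_translate {β : Type*} [DecidableEq β] {V : Finset β} {S : Finset ℝ}
    {p : β → ℝ} (hp : ∀ v ∈ V, p v ∈ S) (a : β → ℝ) (g : ℝ → ℝ) (t : ℝ) :
    ∑ c ∈ S, (∑ v ∈ V with p v = c, a v) * g (t - c) = ∑ v ∈ V, a v * g (t - p v) := by
  rw [← Finset.sum_fiberwise_of_maps_to hp]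
  refine Finset.sum_congr rfl fun c _ => ?_
  rw [Finset.sum_mul]
  exact Finset.sum_congr rfl fun v hv => by rw [(Finset.mem_filter.1 hv).2]

lemma sum_fiber_eq_of_sum_translate_eq {g : ℝ → ℝ} (hbdd : BddAbove (Function.support g))
    (hne : (Function.support g).Nonempty) {β γ : Type*} (V : Finset β) (a p : β → ℝ)
    (W : Finset γ) (b q : γ → ℝ)
    (h : ∀ t, ∑ v ∈ V, a v * g (t - p v) = ∑ j ∈ W, b j * g (t - q j)) (c : ℝ) :
    ∑ v ∈ V with p v = c, a v = ∑ j ∈ W with q j = c, b j := by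
  classical
  set S := insert c (V.image p ∪ W.image q)
  have hpS : ∀ v ∈ V, p v ∈ S := fun v hv =>
    Finset.mem_insert_of_mem (Finset.mem_union_left _ (Finset.mem_image_of_mem p hv))
  have hqS : ∀ j ∈ W, q j ∈ S := fun j hj =>
    Finset.mem_insert_of_mem (Finset.mem_union_right _ (Finset.mem_image_of_mem q hj))
  refine sub_eq_zero.1 (eq_zero_of_sum_mul_translate_eq_zero hbdd hne S
    (fun x => ∑ v ∈ V with p v = x, a v - ∑ j ∈ W with q j = x, b j) (fun t => ?_) c
    (Finset.mem_insert_self c _))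
  simp only [sub_mul, Finset.sum_sub_distrib, sum_fiber_mul_translate hpS,
    sum_fiber_mul_translate hqS, h, sub_self]

instance : NullSingletonClass unif where
  measure_singleton x := by simp [unif]

instance : IsProbabilityMeasure unif where
  measure_univ := by
    rw [unif, Measure.smul_apply, Measure.restrict_apply_univ, Real.volume_Ico, smul_eq_mul,
      ← ENNReal.ofReal_mul (by positivity),
      show 1 / (2 * Real.pi) * (Real.pi - -Real.pi) = 1 by field_simp; ring, ENNReal.ofReal_one]

lemma pi_eq_zero_of_slices {n : ℕ} (μ : Measure ℝ) [SigmaFinite μ] (i : Fin (n + 1))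
    {S : Set (Fin (n + 1) → ℝ)} (hS : MeasurableSet S)
    (h : ∀ θ, μ {t | Function.update θ i t ∈ S} = 0) : Measure.pi (fun _ => μ) S = 0 := by
  have he := (measurePreserving_piFinSuccAbove (fun _ : Fin (n + 1) => μ) i).symm
  rw [← he.measure_preimage hS.nullMeasurableSet, Measure.prod_apply_symm (he.measurable hS)]
  refine (lintegral_congr fun y => ?_).trans lintegral_zero
  have := h (i.insertNth 0 y)
  simp only [Fin.update_insertNth] at this
  exact this

lemma pi_setOf_dot2_uperp_eq_zero {n : ℕ} (μ : Measure ℝ) [SigmaFinite μ]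
    [NullSingletonClass μ] (i : Fin (n + 1)) {d : (Fin (n + 1) → ℝ) → ℝ × ℝ}
    (hd : Measurable d) (hdi : ∀ θ t, d (Function.update θ i t) = d θ) :
    Measure.pi (fun _ => μ) {θ | d θ ≠ 0 ∧ dot2 (d θ) (uperp (θ i)) = 0} = 0 := by
  refine pi_eq_zero_of_slices μ i ((hd (measurableSet_singleton 0)).compl.inter
    (measurableSet_eq_fun (by simp only [dot2_uperp]; fun_prop) measurable_const)) fun θ => ?_
  simp only [Set.mem_ofPred_eq, hdi, Function.update_self]
  by_cases h : d θ = 0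
  · simp [h]
  · simpa [h] using (countable_setOf_dot2_uperp_eq_zero h).measure_zero μ

def GenericAngles {k : ℕ} (w : Fin k → ℝ × ℝ) : Set (Fin 3 → ℝ) :=
  {θ | Function.Injective (fun j => dot2 (w j) (uperp (θ 0))) ∧
    ∀ (j₀ j₁ j₂ : Fin k) (x : ℝ × ℝ), dot2 x (uperp (θ 0)) = dot2 (w j₀) (uperp (θ 0)) →
      dot2 x (uperp (θ 1)) = dot2 (w j₁) (uperp (θ 1)) →
      dot2 x (uperp (θ 2)) = dot2 (w j₂) (uperp (θ 2)) → x = w j₂}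

lemma pi_compl_genericAngles (μ : Measure ℝ) [SigmaFinite μ] [NullSingletonClass μ] {k : ℕ}
    {w : Fin k → ℝ × ℝ} (hw : Function.Injective w) :
    Measure.pi (fun _ => μ) (GenericAngles w)ᶜ = 0 := by
  set meet : Fin k → Fin k → (Fin 3 → ℝ) → ℝ × ℝ := fun j₀ j₁ θ =>
    lineMeet (θ 0) (θ 1) (dot2 (w j₀) (uperp (θ 0))) (dot2 (w j₁) (uperp (θ 1)))
  have hparallel : Measure.pi (fun _ : Fin 3 => μ) {θ | Real.sin (θ 1 - θ 0) = 0} = 0 := by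
    simpa [uvec_ne_zero, dot2_uvec_uperp] using pi_setOf_dot2_uperp_eq_zero μ 1
      (d := fun θ : Fin 3 → ℝ => uvec (θ 0)) (by unfold uvec; fun_prop) fun θ t => by simp
  have hcollide : ∀ j j' : Fin k, Measure.pi (fun _ : Fin 3 => μ)
      {θ | w j - w j' ≠ 0 ∧ dot2 (w j - w j') (uperp (θ 0)) = 0} = 0 := fun j j' =>
    pi_setOf_dot2_uperp_eq_zero μ 0 measurable_const fun _ _ => rfl
  have hconcur : ∀ j₀ j₁ j₂ : Fin k, Measure.pi (fun _ : Fin 3 => μ)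
      {θ | meet j₀ j₁ θ - w j₂ ≠ 0 ∧ dot2 (meet j₀ j₁ θ - w j₂) (uperp (θ 2)) = 0} = 0 :=
    fun j₀ j₁ j₂ => pi_setOf_dot2_uperp_eq_zero μ 2
      (by simp only [meet, lineMeet, dot2_uperp]; fun_prop) fun θ t => by simp [meet]
  refine measure_mono_null ?_ (measure_union_null (measure_union_null hparallel
    (measure_iUnion_null fun j => measure_iUnion_null (hcollide j)))
    (measure_iUnion_null fun j₀ => measure_iUnion_null fun j₁ =>
      measure_iUnion_null (hconcur j₀ j₁)))
  intro θ hθ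
  by_contra hbad
  simp only [Set.mem_union, Set.mem_iUnion, Set.mem_ofPred_eq, not_or, not_exists,
    not_and] at hbad
  obtain ⟨⟨hsin, hcol⟩, hcon⟩ := hbad
  refine hθ ⟨fun j j' hjj' => ?_, fun j₀ j₁ j₂ x h₀ h₁ h₂ => ?_⟩
  · by_contra hne
    exact hcol j j' (sub_ne_zero.2 (hw.ne hne)) (by rw [dot2_sub_left]; exact sub_eq_zero.2 hjj')
  · have hx : x = meet j₀ j₁ θ := eq_of_dot2_uperp_eq hsin
      (h₀.trans (dot2_lineMeet_uperp hsin _ _).1.symm)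
      (h₁.trans (dot2_lineMeet_uperp hsin _ _).2.symm)
    by_contra hne
    exact hcon j₀ j₁ j₂ (hx ▸ sub_ne_zero.2 hne)
      (by rw [← hx, dot2_sub_left]; exact sub_eq_zero.2 h₂)

lemma sum_eq_sum_of_sum_fiber_eq {β γ : Type*} {V : Finset β} {a p : β → ℝ} {W : Finset γ}
    {b q : γ → ℝ} (h : ∀ c, ∑ v ∈ V with p v = c, a v = ∑ j ∈ W with q j = c, b j) :
    ∑ v ∈ V, a v = ∑ j ∈ W, b j := by
  classical
  rw [← Finset.sum_fiberwise_of_maps_to (t := V.image p ∪ W.image q) (g := p) fun v hv =>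
      Finset.mem_union_left _ (Finset.mem_image_of_mem p hv),
    ← Finset.sum_fiberwise_of_maps_to (t := V.image p ∪ W.image q) (g := q) fun j hj =>
      Finset.mem_union_right _ (Finset.mem_image_of_mem q hj)]
  exact Finset.sum_congr rfl fun c _ => h c

section Recovery
variable {k : ℕ} {w : Fin k → ℝ × ℝ} {α : Fin k → ℝ} {W : Finset (ℝ × ℝ)} {a : ℝ × ℝ → ℝ}

lemma mem_range_of_sum_fiber_eq {θ : Fin 3 → ℝ} (hθ : θ ∈ GenericAngles w)
    (ha : ∀ v ∈ W, 0 < a v)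
    (hfib : ∀ i c, ∑ v ∈ W with dot2 v (uperp (θ i)) = c, a v
      = ∑ j with dot2 (w j) (uperp (θ i)) = c, α j) {v : ℝ × ℝ} (hv : v ∈ W) :
    v ∈ Set.range w := by
  have hline : ∀ i, ∃ j, dot2 v (uperp (θ i)) = dot2 (w j) (uperp (θ i)) := fun i => by
    have hpos : 0 < ∑ v' ∈ W with dot2 v' (uperp (θ i)) = dot2 v (uperp (θ i)), a v' :=
      Finset.sum_pos (fun v' hv' => ha v' (Finset.mem_filter.1 hv').1)
        ⟨v, Finset.mem_filter.2 ⟨hv, rfl⟩⟩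
    obtain ⟨j, hj, -⟩ := Finset.exists_ne_zero_of_sum_ne_zero (hfib i _ ▸ hpos.ne')
    exact ⟨j, (Finset.mem_filter.1 hj).2.symm⟩
  obtain ⟨j₀, h₀⟩ := hline 0
  obtain ⟨j₁, h₁⟩ := hline 1
  obtain ⟨j₂, h₂⟩ := hline 2
  exact ⟨j₂, (hθ.2 j₀ j₁ j₂ v h₀ h₁ h₂).symm⟩

lemma sum_smul_diracS_eq_of_sum_fiber_eq {p : ℝ × ℝ → ℝ} (hpw : Function.Injective (p ∘ w))
    (hW : ∀ v ∈ W, v ∈ Set.range w) (hα : ∀ j, α j ≠ 0)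
    (hfib : ∀ c, ∑ v ∈ W with p v = c, a v = ∑ j with p (w j) = c, α j) :
    ∑ v ∈ W, a v • diracS v = ∑ j, α j • diracS (w j) := by
  classical
  have hw := hpw.of_comp
  have hatom : ∀ j, w j ∈ W ∧ a (w j) = α j := fun j => by
    have hR : ({j' | p (w j') = p (w j)} : Finset (Fin k)) = {j} := by
      ext j'
      simp only [Finset.mem_filter, Finset.mem_univ, true_and, Finset.mem_singleton]
      exact hpw.eq_iff
    have hL : ({v ∈ W | p v = p (w j)} : Finset _) = {v ∈ W | v = w j} :=
      Finset.filter_congr fun v hv => by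
        obtain ⟨j', rfl⟩ := hW v hv
        exact hpw.eq_iff.trans hw.eq_iff.symm
    have := hfib (p (w j))
    rw [hR, hL, Finset.sum_singleton, Finset.filter_eq'] at this
    split_ifs at this with hj
    · exact ⟨hj, by simpa using this⟩
    · exact absurd (by simpa using this.symm) (hα j)
  have hWeq : W = Finset.univ.image w := by
    ext v
    simp only [Finset.mem_image, Finset.mem_univ, true_and]
    exact ⟨fun hv => hW v hv, fun ⟨j, hj⟩ => hj ▸ (hatom j).1⟩
  rw [hWeq, Finset.sum_image hw.injOn]
  exact Finset.sum_congr rfl fun j _ => by rw [(hatom j).2]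

lemma recovers_of_mem_genericAngles {g : ℝ → ℝ} (hbdd : BddAbove (Function.support g))
    (hne : (Function.support g).Nonempty) (hα : ∀ j, 0 < α j) {θ : Fin 3 → ℝ}
    (hθ : θ ∈ GenericAngles w) (ha : ∀ v ∈ W, a v ≠ 0)
    (hproj : ∀ i t, ∑ v ∈ W, a v * g (t - dot2 v (uperp (θ i)))
      = ∑ j, α j * g (t - dot2 (w j) (uperp (θ i)))) :
    (∑ j, α j • diracS (w j)).totalVariation Set.univ
        ≤ (∑ v ∈ W, a v • diracS v).totalVariation Set.univ ∧
      ((∑ v ∈ W, a v • diracS v).totalVariation Set.univ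
          = (∑ j, α j • diracS (w j)).totalVariation Set.univ →
        ∑ v ∈ W, a v • diracS v = ∑ j, α j • diracS (w j)) := by
  have hinj : Function.Injective ((fun x => dot2 x (uperp (θ 0))) ∘ w) := hθ.1
  have hfib : ∀ i c, ∑ v ∈ W with dot2 v (uperp (θ i)) = c, a v
      = ∑ j with dot2 (w j) (uperp (θ i)) = c, α j := fun i =>
    sum_fiber_eq_of_sum_translate_eq hbdd hne W a _ Finset.univ α _ (hproj i)
  have hmass : ∑ v ∈ W, a v = ∑ j, |α j| := by
    simp only [abs_of_pos (hα _)]; exact sum_eq_sum_of_sum_fiber_eq (hfib 0)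
  rw [totalVariation_sum_smul_diracS (P := fun v => v) (fun _ _ _ _ h => h),
    totalVariation_sum_smul_diracS hinj.of_comp.injOn, ← hmass]
  refine ⟨ENNReal.ofReal_le_ofReal (Finset.sum_le_sum fun v _ => le_abs_self _), fun hTV => ?_⟩
  have hpos : ∀ v ∈ W, 0 < a v := by
    rw [ENNReal.ofReal_eq_ofReal_iff (Finset.sum_nonneg fun v _ => abs_nonneg _)
      (hmass ▸ Finset.sum_nonneg fun j _ => abs_nonneg _), ← sub_eq_zero,
      ← Finset.sum_sub_distrib, Finset.sum_eq_zero_iff_of_nonneg fun v _ =>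
        sub_nonneg.2 (le_abs_self _)] at hTV
    exact fun v hv => lt_of_le_of_ne (sub_eq_zero.1 (hTV v hv) ▸ abs_nonneg _) (ha v hv).symm
  exact sum_smul_diracS_eq_of_sum_fiber_eq hinj
    (fun v hv => mem_range_of_sum_fiber_eq hθ hpos hfib hv) (fun j => (hα j).ne') (hfib 0)

end Recovery

theorem three_line_scans_recovery_general
    (C : ℝ) (hC0 : 0 < C)
    (k : ℕ) (r : ℝ) (hr : 0 < r)
    (D : ℝ × ℝ → ℝ) (hD_cont : Continuous D)
    (f : ℝ → ℝ) (hD_circ : ∀ w, D w = f (norm2 w))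
    (hD_nonneg : ∀ w, 0 ≤ D w) (hD_ne : D ≠ 0)
    (hD_supp : ∀ w, r < norm2 w → D w = 0)
    (w : Fin k → ℝ × ℝ) (α : Fin k → ℝ) (hα : ∀ j, 0 < α j)
    (hsep : ∀ i j, i ≠ j → (2 / C) * (k : ℝ) ^ 2 * r ≤ norm2 (w i - w j))
    (X₀ : SignedMeasure (ℝ × ℝ)) (hX₀ : X₀ = ∑ j, α j • diracS (w j)) :
    ENNReal.ofReal (1 - C) ≤
      Measure.pi (fun _ : Fin 3 => unif)
        {θv : Fin 3 → ℝ |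
          ∀ (W' : Finset (ℝ × ℝ)) (α' : ℝ × ℝ → ℝ) (X : SignedMeasure (ℝ × ℝ)),
            (∀ v ∈ W', α' v ≠ 0) →
            X = ∑ v ∈ W', α' v • diracS v →
            (∀ i : Fin 3, ∀ t : ℝ,
              lineProj (fun y => sInt X (fun v => D (y - v))) (θv i) t
                = lineProj (fun y => sInt X₀ (fun v => D (y - v))) (θv i) t) →
            X₀.totalVariation Set.univ ≤ X.totalVariation Set.univ ∧
              (X.totalVariation Set.univ = X₀.totalVariation Set.univ → X = X₀)} := by
  have hw : Function.Injective w := fun i j hij => by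
    by_contra hne
    have hk : (0 : ℝ) < k := by exact_mod_cast i.pos
    have := hsep i j hne
    simp [hij, norm2] at this
    exact this.not_gt (by positivity)
  have hD_slice := integrable_slice hD_cont hD_supp
  have hgeneric : Measure.pi (fun _ : Fin 3 => unif) (GenericAngles w) = 1 := by
    rw [measure_congr (ae_eq_univ.2 (pi_compl_genericAngles unif hw)), measure_univ]
  refine (ENNReal.ofReal_le_one.2 (by linarith)).trans
    (hgeneric.symm.trans_le (measure_mono fun θ hθ => ?_))
  intro W' α' X hα' hX hproj
  subst hX hX₀
  simp only [lineProj_conv_sum_smul_diracS (P := fun v => v) hD_circ hD_slice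
    (fun _ _ _ _ h => h), lineProj_conv_sum_smul_diracS hD_circ hD_slice hw.injOn] at hproj
  exact recovers_of_mem_genericAngles (bddAbove_support_profile hD_supp)
    (support_profile_nonempty hD_cont hD_nonneg hD_ne hD_supp) hα hθ hα' hproj

/-- with probability at least `1 - C` over three i.i.d. uniform scan angles,
`X₀` (k well-separated small discs) is the unique TV minimizer among finitely-atomic
signed measures consistent with the three line projections. -/
theorem three_line_scans_recovery
    (C : ℝ) (hC0 : 0 < C) (hC1 : C < 1)
    (k : ℕ) (hk : 2 ≤ k) (r : ℝ) (hr : 0 < r)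
    (D : ℝ × ℝ → ℝ) (hD_cont : Continuous D)
    (f : ℝ → ℝ) (hD_circ : ∀ w, D w = f (norm2 w))
    (hD_nonneg : ∀ w, 0 ≤ D w) (hD_ne : D ≠ 0)
    (hD_supp : ∀ w, r < norm2 w → D w = 0)
    (w : Fin k → ℝ × ℝ) (α : Fin k → ℝ) (hα : ∀ j, 0 < α j)
    (hsep : ∀ i j, i ≠ j → (2 / C) * (k : ℝ) ^ 2 * r ≤ norm2 (w i - w j))
    (X₀ : SignedMeasure (ℝ × ℝ)) (hX₀ : X₀ = ∑ j, α j • diracS (w j)) :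
    ENNReal.ofReal (1 - C) ≤
      Measure.pi (fun _ : Fin 3 => unif)
        {θv : Fin 3 → ℝ |
          ∀ (W' : Finset (ℝ × ℝ)) (α' : ℝ × ℝ → ℝ) (X : SignedMeasure (ℝ × ℝ)),
            (∀ v ∈ W', α' v ≠ 0) →
            X = ∑ v ∈ W', α' v • diracS v →
            (∀ i : Fin 3, ∀ t : ℝ,
              lineProj (fun y => sInt X (fun v => D (y - v))) (θv i) t
                = lineProj (fun y => sInt X₀ (fun v => D (y - v))) (θv i) t) →
            X₀.totalVariation Set.univ ≤ X.totalVariation Set.univ ∧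
              (X.totalVariation Set.univ = X₀.totalVariation Set.univ → X = X₀)} :=
  three_line_scans_recovery_general C hC0 k r hr D hD_cont f hD_circ hD_nonneg hD_ne hD_supp w α hα
    hsep X₀ hX₀
end
end

section
/- Let w_i, w_j ∈ ℝ² with d := ‖w_i − w_j‖₂ ≥ 2r for some r > 0, and let θ be uniformly distributed on [−π, π). Then the probability that the projections of w_i and w_j onto the sweep direction are within 2r of each other equals (2/π)·arcsin(2r/d); that is, P( |⟨u_θ^⊥, w_i − w_j⟩| < 2r ) = (2/π)·arcsin(2r/d). -/
noncomputable section
open MeasureTheory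
open Real Set

lemma sin_ge_aux {a x : ℝ} (ha0 : 0 ≤ a) (hap : a ≤ π/2) (h1 : a ≤ x) (h2 : x ≤ π - a) :
    Real.sin a ≤ Real.sin x := by
  have hpi := Real.pi_pos
  rcases le_total x (π/2) with hx | hx
  · exact Real.strictMonoOn_sin.monotoneOn ⟨by linarith, hap⟩ ⟨by linarith, hx⟩ h1
  · rw [← Real.sin_pi_sub x]
    exact Real.strictMonoOn_sin.monotoneOn ⟨by linarith, hap⟩ ⟨by linarith, by linarith⟩
      (by linarith)

lemma sin_lt_aux {a x : ℝ} (hap : a ≤ π/2) (hx0 : 0 ≤ x) (hxa : x < a) :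
    Real.sin x < Real.sin a := by
  have hpi := Real.pi_pos
  exact Real.strictMonoOn_sin ⟨by linarith, by linarith⟩ ⟨by linarith, hap⟩ hxa

lemma set_eq_aux {c : ℝ} (hc0 : 0 < c) (hc1 : c ≤ 1) :
    {θ : ℝ | |Real.sin θ| < c} ∩ Ioc (-π) π =
      Ioo (-π) (-π + Real.arcsin c) ∪ Ioo (-(Real.arcsin c)) (Real.arcsin c)
        ∪ Ioc (π - Real.arcsin c) π := by
  have hpi := Real.pi_pos
  set a := Real.arcsin c with ha
  have ha0 : 0 < a := Real.arcsin_pos.2 hc0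
  have hap : a ≤ π/2 := Real.arcsin_le_pi_div_two c
  have hsa : Real.sin a = c := Real.sin_arcsin (by linarith) hc1
  ext θ
  simp only [mem_inter_iff, mem_setOf_eq, mem_Ioc, mem_union, mem_Ioo]
  constructor
  · rintro ⟨hs, h1, h2⟩
    rcases le_or_gt a θ with hθ | hθ
    · right
      constructor
      · by_contra hcon
        push_neg at hcon
        have : Real.sin a ≤ Real.sin θ := sin_ge_aux ha0.le hap hθ hcon
        have : Real.sin θ ≤ |Real.sin θ| := le_abs_self _
        linarith [sin_ge_aux ha0.le hap hθ hcon]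
      · exact h2
    · rcases lt_or_ge (-a) θ with hθ2 | hθ2
      · exact Or.inl (Or.inr ⟨hθ2, hθ⟩)
      · left; left
        refine ⟨h1, ?_⟩
        by_contra hcon
        push_neg at hcon
        have h3 : a ≤ -θ := by linarith
        have h4 : -θ ≤ π - a := by linarith
        have := sin_ge_aux ha0.le hap h3 h4
        rw [Real.sin_neg] at this
        have : Real.sin a ≤ |Real.sin θ| := le_trans this (neg_le_abs _)
        linarith
  · rintro ((⟨h1, h2⟩ | ⟨h1, h2⟩) | ⟨h1, h2⟩)
    · have hx0 : 0 ≤ θ + π := by linarith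
      have hxa : θ + π < a := by linarith
      have := sin_lt_aux hap hx0 hxa
      have hsin : Real.sin (θ + π) = -Real.sin θ := by
        rw [Real.sin_add_pi]
      refine ⟨?_, h1, by linarith⟩
      rw [hsin] at this
      rw [abs_lt]
      constructor <;> nlinarith [Real.sin_nonneg_of_nonneg_of_le_pi hx0 (by linarith : θ + π ≤ π),
        hsin ▸ this]
    · rw [← hsa]
      rcases le_total 0 θ with h0 | h0
      · have := sin_lt_aux hap h0 h2
        refine ⟨?_, by linarith, by linarith⟩
        rw [abs_of_nonneg (Real.sin_nonneg_of_nonneg_of_le_pi h0 (by linarith))]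
        exact this
      · have := sin_lt_aux hap (by linarith : (0:ℝ) ≤ -θ) (by linarith : -θ < a)
        rw [Real.sin_neg] at this
        refine ⟨?_, by linarith, by linarith⟩
        rw [abs_of_nonpos (Real.sin_nonpos_of_nonpos_of_neg_pi_le (by linarith) (by linarith))]
        linarith
    · have h0 : 0 ≤ π - θ := by linarith
      have hxa : π - θ < a := by linarith
      have := sin_lt_aux hap h0 hxa
      rw [Real.sin_pi_sub] at this
      refine ⟨?_, by linarith, h2⟩
      rw [← hsa, abs_of_nonneg (Real.sin_nonneg_of_nonneg_of_le_pi (by linarith) h2)]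
      exact this

lemma vol_aux {c : ℝ} (hc0 : 0 < c) (hc1 : c ≤ 1) :
    volume ({θ : ℝ | |Real.sin θ| < c} ∩ Ioc (-π) π) =
      ENNReal.ofReal (4 * Real.arcsin c) := by
  have hpi := Real.pi_pos
  set a := Real.arcsin c with ha
  have ha0 : 0 < a := Real.arcsin_pos.2 hc0
  have hap : a ≤ π/2 := Real.arcsin_le_pi_div_two c
  rw [set_eq_aux hc0 hc1]
  rw [measure_union _ measurableSet_Ioc, measure_union _ measurableSet_Ioo]
  · rw [Real.volume_Ioo, Real.volume_Ioo, Real.volume_Ioc,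
      ← ENNReal.ofReal_add (by linarith) (by linarith),
      ← ENNReal.ofReal_add (by linarith) (by linarith)]
    congr 1
    ring
  · rw [Set.disjoint_left]
    rintro x ⟨h1, h2⟩ ⟨h3, h4⟩
    linarith
  · rw [Set.disjoint_left]
    rintro x (⟨h1, h2⟩ | ⟨h1, h2⟩) ⟨h3, h4⟩ <;> linarith

/-- probability that the projections of two points onto a uniformly random
sweep direction are within `2r` of each other. -/
theorem prob_projection_overlap
    (r : ℝ) (hr : 0 < r) (wi wj : ℝ × ℝ) (hd : 2 * r ≤ norm2 (wi - wj)) :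
    unif {θ : ℝ | |dot2 (uperp θ) (wi - wj)| < 2 * r}
      = ENNReal.ofReal ((2 / Real.pi) * Real.arcsin (2 * r / norm2 (wi - wj))) := by
  have hpi := Real.pi_pos
  set v := wi - wj with hv
  set d := norm2 v with hdd
  have hd0 : 0 < d := lt_of_lt_of_le (by linarith) hd
  set z : ℂ := ⟨v.1, v.2⟩ with hz
  have habs : ‖z‖ = d := by
    rw [Complex.norm_def, Complex.normSq_mk, hdd, norm2]
    congr 1
    ring
  have hz0 : z ≠ 0 := by
    intro h
    rw [h] at habs
    simp at habs
    linarith [habs]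
  set φ := Complex.arg z with hφ
  have hcos : Real.cos φ = v.1 / d := by rw [hφ, Complex.cos_arg hz0, habs]
  have hsin : Real.sin φ = v.2 / d := by rw [hφ, Complex.sin_arg, habs]
  set c := 2 * r / d with hc
  have hc0 : 0 < c := div_pos (by linarith) hd0
  have hc1 : c ≤ 1 := (div_le_one hd0).2 hd
  set a := Real.arcsin c with ha
  have ha0 : 0 < a := Real.arcsin_pos.2 hc0
  have hkey : ∀ θ : ℝ, dot2 (uperp θ) v = d * Real.sin (θ - φ) := by
    intro θ
    rw [Real.sin_sub, hcos, hsin]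
    simp only [dot2, uperp]
    field_simp
    ring
  have hset : {θ : ℝ | |dot2 (uperp θ) v| < 2 * r} = {θ : ℝ | |Real.sin (θ - φ)| < c} := by
    ext θ
    simp only [mem_setOf_eq, hkey θ, abs_mul, abs_of_pos hd0, hc]
    rw [lt_div_iff₀ hd0, mul_comm]
  set T := {θ : ℝ | |Real.sin (θ - φ)| < c} with hT
  have hTmeas : MeasurableSet T := by
    have : T = (fun θ => |Real.sin (θ - φ)|) ⁻¹' (Iio c) := rfl
    rw [this]
    exact ((Real.measurable_sin.comp (measurable_id.sub_const φ)).abs) measurableSet_Iio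
  rw [hset]
  have h1 : unif T = ENNReal.ofReal (1 / (2 * π)) * volume (T ∩ Ico (-π) π) := by
    rw [unif, Measure.smul_apply, Measure.restrict_apply hTmeas, smul_eq_mul]
  rw [h1]
  have h2 : volume (T ∩ Ico (-π) π) = volume (T ∩ Ioc (-π) π) :=
    measure_congr ((Filter.EventuallyEq.refl _ _).inter Ico_ae_eq_Ioc)
  rw [h2]
  have hTinv : ∀ g : AddSubgroup.zmultiples (2 * π), (fun x => g +ᵥ x) ⁻¹' T = T := by
    rintro ⟨g, hg⟩
    obtain ⟨n, rfl⟩ := hg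
    ext x
    simp only [mem_preimage, hT, mem_setOf_eq]
    have hch : ((⟨n • (2*π), ⟨n, rfl⟩⟩ : AddSubgroup.zmultiples (2*π)) +ᵥ x : ℝ)
        = (n • (2*π) : ℝ) + x := rfl
    rw [hch]
    have : (n • (2*π) : ℝ) + x - φ = (x - φ) + n * (2*π) := by
      push_cast [zsmul_eq_mul]
      ring
    rw [this, (Real.sin_periodic.int_mul n) (x - φ)]
  have hfd1 := isAddFundamentalDomain_Ioc Real.two_pi_pos (-π) (volume : Measure ℝ)
  have hfd2 := isAddFundamentalDomain_Ioc Real.two_pi_pos (φ - π) (volume : Measure ℝ)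
  have h3 := hfd1.measure_set_eq hfd2 hTmeas hTinv
  have e1 : -π + 2*π = π := by ring
  have e2 : φ - π + 2*π = φ + π := by ring
  rw [e1, e2] at h3
  rw [h3]
  have h4 : volume (T ∩ Ioc (φ - π) (φ + π))
      = volume ({θ : ℝ | |Real.sin θ| < c} ∩ Ioc (-π) π) := by
    rw [← measure_preimage_add volume φ (T ∩ Ioc (φ - π) (φ + π))]
    congr 1
    ext x
    simp only [mem_preimage, mem_inter_iff, hT, mem_setOf_eq, mem_Ioc]
    constructor
    · rintro ⟨h5, h6, h7⟩
      exact ⟨by simpa using h5, by linarith, by linarith⟩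
    · rintro ⟨h5, h6, h7⟩
      exact ⟨by simpa using h5, by linarith, by linarith⟩
  rw [h4, vol_aux hc0 hc1]
  rw [← ENNReal.ofReal_mul (by positivity)]
  congr 1
  rw [← ha]
  field_simp
  ring
end
end

section
/- Let w_1, …, w_k ∈ ℝ² be k ≥ 2 points whose pairwise distances are all at least d, let r > 0 satisfy r < d/8, and let θ₁, θ₂, θ₃ be independent and uniformly distributed on [−π, π). Then the probability that some pair of the k points has projections within 2r of each other in some of the three scans is at most 2k²r/d; that is, P( ∃ t ∈ {1,2,3}, ∃ i ≠ j : |⟨u_{θₜ}^⊥, w_i − w_j⟩| < 2r ) ≤ 2k²r/d. -/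
/-!
Write `w i - w j = ρ (cos φ, sin φ)` with `ρ ≥ d`. Then `⟨u_θ^⊥, w i - w j⟩ = ρ sin (θ - φ)`, so one
scan brings the pair within `2r` only if `|sin (θ - φ)| < a := 2r/d ≤ 1/4`. Since `sin (πa/3) ≥ a`,
over a period this happens only within `δ = πa/3` of the two zeros of `sin`, which has probability
at most `4δ/(2π) = 4r/(3d)`. A union bound over the three scans and the `k.choose 2 ≤ k²/2`
unordered pairs gives `3 · (k²/2) · 4r/(3d) = 2k²r/d`.
-/

noncomputable section
open MeasureTheory

open Real Set Function

lemma exists_dot2_uperp_eq_norm2_mul_sin (v : ℝ × ℝ) :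
    ∃ φ : ℝ, ∀ θ, dot2 (uperp θ) v = norm2 v * sin (θ - φ) := by
  set z : ℂ := v.1 + v.2 * Complex.I
  have hz : ‖z‖ = norm2 v := Complex.norm_add_mul_I v.1 v.2
  refine ⟨Complex.arg z, fun θ => ?_⟩
  have hre : norm2 v * cos (Complex.arg z) = v.1 := by
    simpa [hz, z] using Complex.norm_mul_cos_arg z
  have him : norm2 v * sin (Complex.arg z) = v.2 := by
    simpa [hz, z] using Complex.norm_mul_sin_arg z
  rw [sin_sub, dot2, uperp, ← hre, ← him]
  ring

lemma abs_dot2_sub_comm (u a b : ℝ × ℝ) : |dot2 u (a - b)| = |dot2 u (b - a)| := by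
  rw [← neg_sub, dot2, dot2, abs_eq_abs]
  right
  simp only [Prod.fst_neg, Prod.snd_neg]
  ring

lemma abs_lt_of_abs_sin_lt_sin {δ y : ℝ} (hδ₀ : 0 ≤ δ) (hδ : δ ≤ π / 2) (hy : |y| ≤ π / 2)
    (h : |sin y| < sin δ) : |y| < δ := by
  rw [abs_sin_eq_sin_abs_of_abs_le_pi (by linarith [pi_pos])] at h
  by_contra! hle
  exact h.not_ge <| strictMonoOn_sin.monotoneOn ⟨by linarith [pi_pos], hδ⟩
    ⟨by linarith [pi_pos, abs_nonneg y], hy⟩ hle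

lemma le_sin_pi_div_three_mul {a : ℝ} (ha₀ : 0 ≤ a) (ha : a ≤ 1 / 4) : a ≤ sin (π / 3 * a) := by
  have hsin := sin_ge_sub_cube (x := π / 3 * a) (by positivity)
  have hlow : 1.04 * a ≤ π / 3 * a := by nlinarith [pi_gt_d2]
  have hup : (π / 3 * a) ^ 3 ≤ (4 / 3 * a) ^ 3 :=
    pow_le_pow_left₀ (by positivity) (by nlinarith [pi_le_four]) 3
  have hcube : a ^ 3 ≤ a / 16 := by nlinarith [mul_le_mul ha ha ha₀ (by norm_num : (0 : ℝ) ≤ 1 / 4)]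
  nlinarith

theorem Function.Periodic.volume_preimage_inter_Ioc_eq {α : Type*} {f : ℝ → α} {c : ℝ}
    (hf : Periodic f c) (hc : 0 < c) {U : Set α} (hU : MeasurableSet (f ⁻¹' U)) (s t : ℝ) :
    volume (f ⁻¹' U ∩ Ioc s (s + c)) = volume (f ⁻¹' U ∩ Ioc t (t + c)) := by
  have : VAddInvariantMeasure (AddSubgroup.zmultiples c) ℝ volume :=
    ⟨fun g s _ => measure_preimage_add _ _ _⟩
  refine (isAddFundamentalDomain_Ioc hc s).measure_set_eq (isAddFundamentalDomain_Ioc hc t) hU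
    fun g => ?_
  ext x
  simp only [mem_preimage, hf.map_vadd_zmultiples g x]

lemma volume_abs_sin_sub_lt_inter_Ioc_le {a δ : ℝ} (φ : ℝ) (hδ₀ : 0 ≤ δ) (hδ : δ ≤ π / 2)
    (ha : a ≤ sin δ) :
    volume ({θ | |sin (θ - φ)| < a} ∩ Ioc (-π) π) ≤ ENNReal.ofReal (4 * δ) := by
  have hπ := pi_pos
  set T := (fun y => |sin y|) ⁻¹' Iio a
  have hT : MeasurableSet T := measurableSet_Iio.preimage (by fun_prop)
  have hper : Periodic (fun y => |sin y|) (2 * π) := fun y => by simp only [sin_add_two_pi]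
  have hshift : {θ | |sin (θ - φ)| < a} ∩ Ioc (-π) π
      = (· + -φ) ⁻¹' (T ∩ Ioc (-π - φ) (-π - φ + 2 * π)) := by
    ext θ
    simp only [T, mem_inter_iff, mem_preimage, mem_ofPred_eq, mem_Iio, mem_Ioc, ← sub_eq_add_neg]
    constructor <;> rintro ⟨h, h₁, h₂⟩ <;> exact ⟨h, by linarith, by linarith⟩
  have hcover : T ∩ Ioc (-(π / 2)) (-(π / 2) + 2 * π) ⊆ Ioo (-δ) δ ∪ Ioo (π - δ) (π + δ) := by
    rintro y ⟨hy, hy₁, hy₂⟩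
    have hy : |sin y| < sin δ := lt_of_lt_of_le hy ha
    rcases le_or_gt y (π / 2) with hle | hgt
    · left
      exact abs_lt.1 (abs_lt_of_abs_sin_lt_sin hδ₀ hδ (abs_le.2 ⟨hy₁.le, hle⟩) hy)
    · right
      rw [← abs_neg, ← sin_sub_pi] at hy
      have := abs_lt.1 (abs_lt_of_abs_sin_lt_sin hδ₀ hδ (abs_le.2 ⟨by linarith, by linarith⟩) hy)
      exact ⟨by linarith, by linarith⟩
  calc volume ({θ | |sin (θ - φ)| < a} ∩ Ioc (-π) π)
      = volume (T ∩ Ioc (-(π / 2)) (-(π / 2) + 2 * π)) := by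
        rw [hshift, measure_preimage_add_right, hper.volume_preimage_inter_Ioc_eq two_pi_pos hT]
    _ ≤ volume (Ioo (-δ) δ) + volume (Ioo (π - δ) (π + δ)) :=
        (measure_mono hcover).trans (measure_union_le _ _)
    _ = ENNReal.ofReal (4 * δ) := by
        rw [Real.volume_Ioo, Real.volume_Ioo, ← ENNReal.ofReal_add (by linarith) (by linarith)]
        ring_nf

lemma unif_apply {s : Set ℝ} (hs : MeasurableSet s) :
    unif s = ENNReal.ofReal (1 / (2 * π)) * volume (s ∩ Ioc (-π) π) := by
  rw [unif, Measure.smul_apply, smul_eq_mul, Measure.restrict_congr_set Ico_ae_eq_Ioc,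
    Measure.restrict_apply hs]

instance inst_s4 : IsProbabilityMeasure unif := by
  constructor
  rw [unif_apply MeasurableSet.univ, univ_inter, Real.volume_Ioc,
    ← ENNReal.ofReal_mul (by positivity [pi_pos])]
  field_simp
  ring_nf
  exact ENNReal.ofReal_one

lemma unif_abs_dot2_uperp_lt_le {ε d : ℝ} {v : ℝ × ℝ} (hε : 0 < ε) (hεd : 4 * ε ≤ d)
    (hd : d ≤ norm2 v) :
    unif {θ | |dot2 (uperp θ) v| < ε} ≤ ENNReal.ofReal (2 * ε / (3 * d)) := by
  obtain ⟨φ, hφ⟩ := exists_dot2_uperp_eq_norm2_mul_sin v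
  have hd₀ : 0 < d := by linarith
  set a := ε / d with ha_def
  have ha₀ : 0 ≤ a := by positivity
  have ha : a ≤ 1 / 4 := (div_le_iff₀ hd₀).2 (by linarith)
  have hsub : {θ | |dot2 (uperp θ) v| < ε} ⊆ {θ | |sin (θ - φ)| < a} := by
    intro θ hθ
    rw [mem_ofPred_eq, hφ, abs_mul, abs_of_pos (hd₀.trans_le hd)] at hθ
    rw [mem_ofPred_eq, lt_div_iff₀ hd₀]
    nlinarith [abs_nonneg (sin (θ - φ))]
  calc unif {θ | |dot2 (uperp θ) v| < ε}
      ≤ ENNReal.ofReal (1 / (2 * π)) * volume ({θ | |sin (θ - φ)| < a} ∩ Ioc (-π) π) := by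
        rw [← unif_apply (measurableSet_lt (by fun_prop) measurable_const)]
        exact measure_mono hsub
    _ ≤ ENNReal.ofReal (1 / (2 * π)) * ENNReal.ofReal (4 * (π / 3 * a)) := by
        gcongr
        exact volume_abs_sin_sub_lt_inter_Ioc_le φ (by positivity) (by nlinarith [pi_pos])
          (le_sin_pi_div_three_mul ha₀ ha)
    _ = ENNReal.ofReal (2 * ε / (3 * d)) := by
        rw [← ENNReal.ofReal_mul (by positivity [pi_pos]), ha_def]
        congr 1
        field_simp [pi_pos.ne']
        ring

lemma measure_pi_unif_abs_dot2_uperp_lt_le {ι : Type*} [Fintype ι] (t : ι) {ε d : ℝ}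
    {v : ℝ × ℝ} (hε : 0 < ε) (hεd : 4 * ε ≤ d) (hd : d ≤ norm2 v) :
    Measure.pi (fun _ : ι => unif) {θv | |dot2 (uperp (θv t)) v| < ε}
      ≤ ENNReal.ofReal (2 * ε / (3 * d)) := by
  have hs : MeasurableSet {θ | |dot2 (uperp θ) v| < ε} :=
    measurableSet_lt (by unfold dot2 uperp; fun_prop) measurable_const
  exact ((measurePreserving_eval (fun _ : ι => unif) t).measure_preimage
    hs.nullMeasurableSet).trans_le (unif_abs_dot2_uperp_lt_le hε hεd hd)

lemma measure_exists_ne_le_choose_two_mul {Ω ι : Type*} [MeasurableSpace Ω] [Fintype ι]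
    (μ : Measure Ω) {A : ι → ι → Set Ω} (hA : ∀ i j, A i j = A j i) {c : ENNReal}
    (hc : ∀ i j, i ≠ j → μ (A i j) ≤ c) :
    μ {x | ∃ i j, i ≠ j ∧ x ∈ A i j} ≤ (Fintype.card ι).choose 2 * c := by
  classical
  let B : Sym2 ι → Set Ω := Sym2.lift ⟨A, hA⟩
  have hsub : {x | ∃ i j, i ≠ j ∧ x ∈ A i j} ⊆ ⋃ z : {z : Sym2 ι // ¬z.IsDiag}, B z := by
    rintro x ⟨i, j, hij, hx⟩
    exact mem_iUnion.2 ⟨⟨s(i, j), Sym2.mk_isDiag_iff.not.2 hij⟩, hx⟩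
  have hB : ∀ z : {z : Sym2 ι // ¬z.IsDiag}, μ (B z) ≤ c := by
    rintro ⟨z, hz⟩
    induction z using Sym2.ind with
    | _ i j => exact hc i j (Sym2.mk_isDiag_iff.not.1 hz)
  calc μ {x | ∃ i j, i ≠ j ∧ x ∈ A i j}
      ≤ ∑ z : {z : Sym2 ι // ¬z.IsDiag}, μ (B z) :=
        (measure_mono hsub).trans (measure_iUnion_fintype_le _ _)
    _ ≤ ∑ _z : {z : Sym2 ι // ¬z.IsDiag}, c := Finset.sum_le_sum fun z _ => hB z
    _ = (Fintype.card ι).choose 2 * c := by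
        rw [Finset.sum_const, Finset.card_univ, Sym2.card_subtype_not_diag, nsmul_eq_mul]

theorem prob_some_pair_overlaps_general
    (k : ℕ) (d r : ℝ) (hr : 0 < r) (hrd : r < d / 8)
    (w : Fin k → ℝ × ℝ) (hsep : ∀ i j, i ≠ j → d ≤ norm2 (w i - w j)) :
    Measure.pi (fun _ : Fin 3 => unif)
        {θv : Fin 3 → ℝ | ∃ t : Fin 3, ∃ i j : Fin k, i ≠ j ∧
          |dot2 (uperp (θv t)) (w i - w j)| < 2 * r}
      ≤ ENNReal.ofReal (2 * (k : ℝ) ^ 2 * r / d) := by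
  set μ := Measure.pi (fun _ : Fin 3 => unif)
  set p := ENNReal.ofReal (2 * (2 * r) / (3 * d))
  have hscan : ∀ t : Fin 3, μ {θv | ∃ i j : Fin k, i ≠ j ∧
      |dot2 (uperp (θv t)) (w i - w j)| < 2 * r} ≤ k.choose 2 * p := fun t => by
    simpa using measure_exists_ne_le_choose_two_mul μ
      (A := fun i j => {θv | |dot2 (uperp (θv t)) (w i - w j)| < 2 * r})
      (fun i j => by simp only [abs_dot2_sub_comm]) fun i j hij =>
        measure_pi_unif_abs_dot2_uperp_lt_le t (by positivity) (by linarith) (hsep i j hij)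
  calc μ {θv | ∃ t, ∃ i j, i ≠ j ∧ |dot2 (uperp (θv t)) (w i - w j)| < 2 * r}
      = μ (⋃ t, {θv | ∃ i j : Fin k, i ≠ j ∧ |dot2 (uperp (θv t)) (w i - w j)| < 2 * r}) := by
        simp only [ofPred_exists]
    _ ≤ ∑ _t : Fin 3, k.choose 2 * p :=
        (measure_iUnion_fintype_le _ _).trans (Finset.sum_le_sum fun t _ => hscan t)
    _ ≤ ENNReal.ofReal (2 * (k : ℝ) ^ 2 * r / d) := by
        rw [Finset.sum_const, Finset.card_univ, Fintype.card_fin, nsmul_eq_mul,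
          ← ENNReal.ofReal_natCast, ← ENNReal.ofReal_natCast,
          ← ENNReal.ofReal_mul (by positivity), ← ENNReal.ofReal_mul (by positivity)]
        refine ENNReal.ofReal_le_ofReal ?_
        have hd : 0 < d := by linarith
        have hchoose : (k.choose 2 : ℝ) ≤ k ^ 2 / 2 := by
          simpa using Nat.choose_le_pow_div (α := ℝ) 2 k
        calc (3 : ℕ) * ((k.choose 2 : ℝ) * (2 * (2 * r) / (3 * d)))
            = k.choose 2 * (4 * r / d) := by push_cast; field_simp; ring
          _ ≤ k ^ 2 / 2 * (4 * r / d) := by gcongr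
          _ = 2 * k ^ 2 * r / d := by ring

/-- union bound on the probability that some pair of the `k` points has
overlapping projections (within `2r`) in some of the three random scans. -/
theorem prob_some_pair_overlaps
    (k : ℕ) (hk : 2 ≤ k) (d r : ℝ) (hr : 0 < r) (hrd : r < d / 8)
    (w : Fin k → ℝ × ℝ) (hsep : ∀ i j, i ≠ j → d ≤ norm2 (w i - w j)) :
    Measure.pi (fun _ : Fin 3 => unif)
        {θv : Fin 3 → ℝ | ∃ t : Fin 3, ∃ i j : Fin k, i ≠ j ∧
          |dot2 (uperp (θv t)) (w i - w j)| < 2 * r}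
      ≤ ENNReal.ofReal (2 * (k : ℝ) ^ 2 * r / d) :=
  prob_some_pair_overlaps_general k d r hr hrd w hsep
end
end

section
/- For every real a ≥ 0, (1/π)·∫₀^π exp(−a·cos²θ) dθ ≤ 1/√(1 + a). -/
open Real intervalIntegral MeasureTheory Filter Set

lemma cont_g (a : ℝ) (ha : 0 ≤ a) : Continuous (fun θ : ℝ => (1 + a * Real.cos θ ^ 2)⁻¹) := by
  apply Continuous.inv₀ (by continuity)
  intro θ
  positivity

lemma key_ftc (a : ℝ) (ha : 0 ≤ a) {b : ℝ} (hb0 : 0 ≤ b) (hb : b < Real.pi / 2) :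
    ∫ θ in (0:ℝ)..b, (1 + a * Real.cos θ ^ 2)⁻¹
      = (1 / Real.sqrt (1 + a)) * Real.arctan (Real.tan b / Real.sqrt (1 + a)) := by
  set c := Real.sqrt (1 + a) with hc
  have hcpos : 0 < c := Real.sqrt_pos.2 (by linarith)
  have hc2 : c ^ 2 = 1 + a := Real.sq_sqrt (by linarith)
  have : ∀ θ ∈ Set.uIcc (0:ℝ) b, HasDerivAt
      (fun x => (1 / c) * Real.arctan (Real.tan x / c))
      ((1 + a * Real.cos θ ^ 2)⁻¹) θ := by
    intro θ hθ
    rw [Set.uIcc_of_le hb0] at hθ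
    have hcos : 0 < Real.cos θ := Real.cos_pos_of_mem_Ioo
      ⟨by linarith [hθ.1, Real.pi_pos], lt_of_le_of_lt hθ.2 hb⟩
    have h1 := ((Real.hasDerivAt_arctan (Real.tan θ / c)).comp θ
      ((Real.hasDerivAt_tan hcos.ne').div_const c)).const_mul (1 / c)
    convert h1 using 1
    · rfl
    · rfl
    · rfl
    have hsin : Real.sin θ ^ 2 = 1 - Real.cos θ ^ 2 := by
      nlinarith [Real.sin_sq_add_cos_sq θ]
    rw [Real.tan_eq_sin_div_cos]
    field_simp
    rw [hsin, show a = c ^ 2 - 1 by linarith]; ring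
  rw [intervalIntegral.integral_eq_sub_of_hasDerivAt this
    (((cont_g a ha).intervalIntegrable _ _))]
  simp [Real.tan_zero]

/-- `(1/π)·∫₀^π exp(−a·cos²θ) dθ ≤ 1/√(1+a)` for `a ≥ 0`. -/
theorem integral_exp_neg_mul_cos_sq_le (a : ℝ) (ha : 0 ≤ a) :
    (1 / Real.pi) * ∫ θ in (0 : ℝ)..Real.pi, Real.exp (-(a * Real.cos θ ^ 2))
      ≤ 1 / Real.sqrt (1 + a) := by
  set c := Real.sqrt (1 + a) with hc
  have hcpos : 0 < c := Real.sqrt_pos.2 (by linarith)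
  have hpi := Real.pi_pos
  set g : ℝ → ℝ := fun θ => (1 + a * Real.cos θ ^ 2)⁻¹ with hg
  have hgint : ∀ x y : ℝ, IntervalIntegrable g MeasureTheory.volume x y :=
    fun x y => (cont_g a ha).intervalIntegrable x y
  -- half integral bound
  have hhalf : ∫ θ in (0:ℝ)..(Real.pi/2), g θ ≤ Real.pi / (2 * c) := by
    have hcont : ContinuousAt (fun b => ∫ θ in (0:ℝ)..b, g θ) (Real.pi/2) :=
      (intervalIntegral.continuous_primitive hgint 0).continuousAt
    have htend : Tendsto (fun b => ∫ θ in (0:ℝ)..b, g θ)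
        (nhdsWithin (Real.pi/2) (Set.Iio (Real.pi/2)))
        (nhds (∫ θ in (0:ℝ)..(Real.pi/2), g θ)) :=
      hcont.tendsto.mono_left nhdsWithin_le_nhds
    refine le_of_tendsto htend ?_
    filter_upwards [Ioo_mem_nhdsLT_of_mem ⟨by positivity, le_refl _⟩] with b hb
    rw [key_ftc a ha hb.1.le hb.2]
    have h1 : Real.arctan (Real.tan b / c) ≤ Real.pi / 2 :=
      (Real.arctan_lt_pi_div_two _).le
    calc (1 / c) * Real.arctan (Real.tan b / c) ≤ (1 / c) * (Real.pi / 2) := by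
          apply mul_le_mul_of_nonneg_left h1 (by positivity)
      _ = Real.pi / (2 * c) := by ring
  -- symmetry
  have hsym : ∫ θ in (0:ℝ)..Real.pi, g θ = 2 * ∫ θ in (0:ℝ)..(Real.pi/2), g θ := by
    have h1 : ∫ θ in (Real.pi/2)..Real.pi, g θ = ∫ θ in (0:ℝ)..(Real.pi/2), g θ := by
      have h2 := intervalIntegral.integral_comp_sub_left (a := Real.pi/2)
        (b := Real.pi) g Real.pi
      rw [show Real.pi - Real.pi = 0 by ring,
        show Real.pi - Real.pi/2 = Real.pi/2 by ring] at h2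
      rw [← h2]
      apply intervalIntegral.integral_congr
      intro x _
      simp [hg, Real.cos_pi_sub]
    rw [← intervalIntegral.integral_add_adjacent_intervals (hgint 0 (Real.pi/2))
      (hgint (Real.pi/2) Real.pi), h1]
    ring
  have hgle : ∫ θ in (0:ℝ)..Real.pi, g θ ≤ Real.pi / c := by
    rw [hsym]
    have : 2 * (Real.pi / (2 * c)) = Real.pi / c := by field_simp
    linarith
  -- pointwise bound
  have hmono : (∫ θ in (0:ℝ)..Real.pi, Real.exp (-(a * Real.cos θ ^ 2)))
      ≤ ∫ θ in (0:ℝ)..Real.pi, g θ := by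
    apply intervalIntegral.integral_mono_on hpi.le
      (Continuous.intervalIntegrable (by continuity) _ _) (hgint 0 Real.pi)
    intro θ _
    have hx : 0 ≤ a * Real.cos θ ^ 2 := by positivity
    rw [Real.exp_neg]
    exact inv_anti₀ (by linarith)
      (by linarith [Real.add_one_le_exp (a * Real.cos θ ^ 2)])
  calc (1 / Real.pi) * ∫ θ in (0:ℝ)..Real.pi, Real.exp (-(a * Real.cos θ ^ 2))
      ≤ (1 / Real.pi) * (Real.pi / c) := by
        apply mul_le_mul_of_nonneg_left (le_trans hmono hgle) (by positivity)
    _ = 1 / c := by field_simp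
end

section
/- Let r > 0 and d > 2r. Then (1/π)·∫₀^π exp( −(d²/(4r²))·cos²θ ) dθ ≥ r/(2d). -/
/-!
Near `θ = π/2` the cosine is small: `|cos θ| ≤ |θ - π/2|`, so on the window `|θ - π/2| ≤ t` with
`(d² / (4 r²)) t² = 1/2`, i.e. `t = √2 r / d`, the integrand is at least `e^{-1/2}`. The window lies
in `[0, π]` because `d > 2r`, and integrating over it alone gives `2 t e^{-1/2} = (r / (2d)) · 4√2 e^{-1/2}`,
which beats `π · r / (2d)` since `π² e < 32`.
-/

open Real

lemma abs_cos_le_abs_sub_pi_div_two (θ : ℝ) : |cos θ| ≤ |θ - π / 2| := by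
  rw [← sin_pi_div_two_sub, abs_sub_comm]
  exact abs_sin_le_abs

lemma exp_neg_mul_sq_le_exp_neg_mul_cos_sq {a t θ : ℝ} (ha : 0 ≤ a) (hθ : |θ - π / 2| ≤ t) :
    exp (-(a * t ^ 2)) ≤ exp (-a * cos θ ^ 2) := by
  obtain ⟨hlo, hhi⟩ := abs_le.1 ((abs_cos_le_abs_sub_pi_div_two θ).trans hθ)
  have hcos : cos θ ^ 2 ≤ t ^ 2 := sq_le_sq' hlo hhi
  rw [exp_le_exp, neg_mul, neg_le_neg_iff]
  exact mul_le_mul_of_nonneg_left hcos ha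

lemma two_mul_mul_exp_neg_mul_sq_le_integral_exp_neg_mul_cos_sq {a t : ℝ} (ha : 0 ≤ a)
    (ht : 0 ≤ t) (htπ : t ≤ π / 2) :
    2 * t * exp (-(a * t ^ 2)) ≤ ∫ θ in (0 : ℝ)..π, exp (-a * cos θ ^ 2) := by
  have hf : Continuous fun θ => exp (-a * cos θ ^ 2) := by fun_prop
  calc 2 * t * exp (-(a * t ^ 2))
      = ∫ _ in (π / 2 - t)..(π / 2 + t), exp (-(a * t ^ 2)) := by
        rw [intervalIntegral.integral_const, smul_eq_mul]; ring
    _ ≤ ∫ θ in (π / 2 - t)..(π / 2 + t), exp (-a * cos θ ^ 2) := by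
        refine intervalIntegral.integral_mono_on (by linarith) intervalIntegrable_const
          (hf.intervalIntegrable _ _) fun θ hθ => exp_neg_mul_sq_le_exp_neg_mul_cos_sq ha ?_
        rw [abs_le]; constructor <;> linarith [hθ.1, hθ.2]
    _ ≤ ∫ θ in (0 : ℝ)..π, exp (-a * cos θ ^ 2) :=
        intervalIntegral.integral_mono_interval (by linarith) (by linarith) (by linarith)
          (Filter.Eventually.of_forall fun _ => (exp_pos _).le) (hf.intervalIntegrable _ _)

lemma pi_le_four_mul_sqrt_two_mul_exp_neg_half : π ≤ 4 * √2 * exp (-(1 / 2)) := by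
  have hsq : (π * exp (1 / 2)) ^ 2 ≤ (4 * √2) ^ 2 := by
    rw [mul_pow, mul_pow, ← exp_nat_mul, sq_sqrt zero_le_two, Nat.cast_ofNat,
      mul_one_div_cancel two_ne_zero]
    nlinarith [pi_lt_d2, pi_pos, exp_one_lt_d9]
  rw [exp_neg, ← div_eq_mul_inv, le_div_iff₀ (exp_pos _)]
  exact (pow_le_pow_iff_left₀ (by positivity) (by positivity) two_ne_zero).1 hsq

/-- for `d > 2r`, `(1/π)·∫₀^π exp(−(d²/(4r²))·cos²θ) dθ ≥ r/(2d)`. -/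
theorem integral_exp_neg_cos_sq_ge_far (r d : ℝ) (hr : 0 < r) (hd : 2 * r < d) :
    r / (2 * d) ≤
      (1 / Real.pi) * ∫ θ in (0 : ℝ)..Real.pi, Real.exp (-(d ^ 2 / (4 * r ^ 2)) * Real.cos θ ^ 2) := by
  have hd0 : 0 < d := by linarith
  set t := √2 * r / d
  have hat : d ^ 2 / (4 * r ^ 2) * t ^ 2 = 1 / 2 := by
    simp only [t, div_pow, mul_pow, sq_sqrt zero_le_two]; field_simp; ring
  have htπ : t ≤ π / 2 := by
    have : √2 ≤ 2 := by rw [sqrt_le_left zero_le_two]; norm_num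
    rw [div_le_iff₀ hd0]; nlinarith [pi_gt_three]
  have hI := two_mul_mul_exp_neg_mul_sq_le_integral_exp_neg_mul_cos_sq (a := d ^ 2 / (4 * r ^ 2))
    (by positivity) (by positivity) htπ
  rw [hat] at hI
  calc r / (2 * d) ≤ 1 / π * (2 * t * exp (-(1 / 2))) := by
        rw [one_div, inv_mul_eq_div, le_div_iff₀ pi_pos]
        calc r / (2 * d) * π ≤ r / (2 * d) * (4 * √2 * exp (-(1 / 2))) := by
              gcongr; exact pi_le_four_mul_sqrt_two_mul_exp_neg_half
          _ = 2 * t * exp (-(1 / 2)) := by simp only [t]; field_simp; ring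
    _ ≤ _ := by gcongr
end

section
/- Let r > 0 and ε > 0 with 8r² ≥ ε, and set f_c = (1/r)·min{ 2r²/ε, √(log(8r²/ε)) + 0.2 }. Then for every real t with t ≥ f_c, (2r/(√π·t))·exp(−4π²r²t²) ≤ ε. Consequently the Fourier multiplier of the averaged project-then-backproject kernel for the Gaussian of width r is bounded by ε at all frequencies of norm at least f_c. -/
/-- the Fourier multiplier `(2r/(√π·t))·exp(−4π²r²t²)` of the averaged
project-then-backproject kernel is at most `ε` for all frequencies `t ≥ f_c`, where
`f_c = (1/r)·min{2r²/ε, √(log(8r²/ε)) + 0.2}`. -/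
theorem multiplier_le_eps_beyond_cutoff
    (r ε : ℝ) (hr : 0 < r) (hε : 0 < ε) (h8 : ε ≤ 8 * r ^ 2)
    (fc : ℝ)
    (hfc : fc = (1 / r) * min (2 * r ^ 2 / ε) (Real.sqrt (Real.log (8 * r ^ 2 / ε)) + 0.2)) :
    ∀ t : ℝ, fc ≤ t →
      (2 * r / (Real.sqrt Real.pi * t)) * Real.exp (-(4 * Real.pi ^ 2 * r ^ 2 * t ^ 2)) ≤ ε := by
  intro t ht
  have hπ : (1.25:ℝ) ≤ Real.sqrt Real.pi := by
    have h1 : Real.sqrt (1.5625) ≤ Real.sqrt Real.pi :=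
      Real.sqrt_le_sqrt (by nlinarith [Real.pi_gt_three])
    have h2 : Real.sqrt (1.5625:ℝ) = 1.25 := by
      rw [show (1.5625:ℝ) = 1.25 ^ 2 by norm_num, Real.sqrt_sq (by norm_num)]
    linarith [h1, h2.symm.le, h2.le]
  rcases min_cases (2 * r ^ 2 / ε) (Real.sqrt (Real.log (8 * r ^ 2 / ε)) + 0.2) with
    ⟨hm, _⟩ | ⟨hm, _⟩
  · -- fc = (1/r) * (2r²/ε) = 2r/ε
    rw [hm] at hfc
    have ht' : 2 * r / ε ≤ t := by
      have : (1 / r) * (2 * r ^ 2 / ε) = 2 * r / ε := by field_simp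
      rw [hfc, this] at ht
      exact ht
    have htpos : 0 < t := lt_of_lt_of_le (by positivity) ht'
    have hεt : 2 * r ≤ ε * t := by
      rw [div_le_iff₀ hε] at ht'
      linarith [ht']
    have hexp : Real.exp (-(4 * Real.pi ^ 2 * r ^ 2 * t ^ 2)) ≤ 1 := by
      rw [show (1:ℝ) = Real.exp 0 by simp]
      apply Real.exp_le_exp.mpr
      nlinarith [Real.pi_pos, sq_nonneg (Real.pi * r * t)]
    have hfrac : 2 * r / (Real.sqrt Real.pi * t) ≤ ε := by
      rw [div_le_iff₀ (by positivity)]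
      nlinarith [mul_le_mul_of_nonneg_right hπ htpos.le, hεt, hε]
    calc 2 * r / (Real.sqrt Real.pi * t) * Real.exp (-(4 * Real.pi ^ 2 * r ^ 2 * t ^ 2))
        ≤ ε * 1 := mul_le_mul hfrac hexp (Real.exp_nonneg _) hε.le
      _ = ε := by ring
  · -- fc = (1/r) * (√log(8r²/ε) + 0.2)
    rw [hm] at hfc
    set L := Real.log (8 * r ^ 2 / ε) with hLdef
    have hL : 0 ≤ L := Real.log_nonneg ((one_le_div hε).mpr h8)
    have hs : 0 ≤ Real.sqrt L := Real.sqrt_nonneg L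
    have hu : Real.sqrt L + 0.2 ≤ r * t := by
      rw [hfc] at ht
      have := mul_le_mul_of_nonneg_left ht hr.le
      calc Real.sqrt L + 0.2 = r * ((1 / r) * (Real.sqrt L + 0.2)) := by
            field_simp
        _ ≤ r * t := this
    have htpos : 0 < t := by nlinarith
    have hrt : Real.sqrt L ≤ r * t := by linarith
    have h1 : L ≤ (r * t) ^ 2 := by nlinarith [Real.sq_sqrt hL]
    have harg : L ≤ 4 * Real.pi ^ 2 * r ^ 2 * t ^ 2 := by
      have hpi2 : (1:ℝ) ≤ 4 * Real.pi ^ 2 := by nlinarith [Real.pi_gt_three]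
      nlinarith [h1, mul_le_mul_of_nonneg_right hpi2 (sq_nonneg (r * t))]
    have hexp : Real.exp (-(4 * Real.pi ^ 2 * r ^ 2 * t ^ 2)) ≤ ε / (8 * r ^ 2) := by
      have h1 : Real.exp (-(4 * Real.pi ^ 2 * r ^ 2 * t ^ 2)) ≤ Real.exp (-L) :=
        Real.exp_le_exp.mpr (by linarith)
      have h2 : Real.exp (-L) = ε / (8 * r ^ 2) := by
        rw [Real.exp_neg, hLdef, Real.exp_log (by positivity), inv_div]
      linarith [h1, h2.le]
    have hfrac : 2 * r / (Real.sqrt Real.pi * t) ≤ 8 * r ^ 2 := by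
      rw [div_le_iff₀ (by positivity)]
      nlinarith [mul_le_mul_of_nonneg_right hπ htpos.le, hu, hr.le, hs,
        mul_le_mul_of_nonneg_left hu hr.le]
    calc 2 * r / (Real.sqrt Real.pi * t) * Real.exp (-(4 * Real.pi ^ 2 * r ^ 2 * t ^ 2))
        ≤ (8 * r ^ 2) * (ε / (8 * r ^ 2)) :=
          mul_le_mul hfrac hexp (Real.exp_nonneg _) (by positivity)
      _ = ε := by field_simp
end
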